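/- arXiv:math/0110039 — 2 statements merged into one kernel-verified Lean document; each statement's English description precedes it below -/
import Mathlib

section
/- For every k≥2, the generating function G_{12-3-⋯-k}(x) for permutations avoiding 1-3-2 and containing exactly one occurrence of the generalized pattern 12-3-⋯-k (first two letters adjacent, all later letters separated by dashes) satisfies (1−x)·V_k(x)²·G_{12-3-⋯-k}(x) = x^k; equivalently G_{12-3-⋯-k}(x) = 1/((1−x)·U_k(1/(2√x))²). -/
open Finset PowerSeries

/-- A generalized pattern in the sense of Babson–Steingrímsson: a permutation of
`Fin k` together with a set of (0-indexed) positions `j` such that the letters in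
positions `j` and `j+1` must be adjacent in any occurrence. -/
structure GenPattern (k : ℕ) where
  perm : Equiv.Perm (Fin k)
  adj : Set ℕ

/-- `f` is an occurrence of the generalized pattern `p` in the permutation `π`. -/
def GenPattern.Occ {k n : ℕ} (p : GenPattern k) (π : Equiv.Perm (Fin n))
    (f : Fin k → Fin n) : Prop :=
  StrictMono f ∧
  (∀ a b : Fin k, π (f a) < π (f b) ↔ p.perm a < p.perm b) ∧
  (∀ j : ℕ, j ∈ p.adj → ∀ hj : j + 1 < k,
    ((f ⟨j + 1, hj⟩ : ℕ) = (f ⟨j, by omega⟩ : ℕ) + 1))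

/-- `π` avoids the generalized pattern `p`. -/
def GenPattern.Avoids {k n : ℕ} (p : GenPattern k) (π : Equiv.Perm (Fin n)) : Prop :=
  ¬ ∃ f, p.Occ π f

/-- `π` contains exactly one occurrence of the generalized pattern `p`. -/
def GenPattern.ContainsOnce {k n : ℕ} (p : GenPattern k) (π : Equiv.Perm (Fin n)) : Prop :=
  ∃! f, p.Occ π f

/-- The classical pattern 1-3-2 (as a generalized pattern with no adjacencies). -/
def pat132 : GenPattern 3 := ⟨Equiv.swap 1 2, ∅⟩

/-- `F_τ(x)`: generating function for permutations avoiding 1-3-2 and `p`. -/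
noncomputable def Fgen {k : ℕ} (p : GenPattern k) : PowerSeries ℚ :=
  PowerSeries.mk fun n =>
    (Nat.card {π : Equiv.Perm (Fin n) // pat132.Avoids π ∧ p.Avoids π} : ℚ)

/-- `G_τ(x)`: generating function for permutations avoiding 1-3-2 and containing
`p` exactly once. -/
noncomputable def Ggen {k : ℕ} (p : GenPattern k) : PowerSeries ℚ :=
  PowerSeries.mk fun n =>
    (Nat.card {π : Equiv.Perm (Fin n) // pat132.Avoids π ∧ p.ContainsOnce π} : ℚ)

/-- `H_τ(x)`: generating function for permutations containing 1-3-2 exactly once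
and avoiding `p`. -/
noncomputable def Hgen {k : ℕ} (p : GenPattern k) : PowerSeries ℚ :=
  PowerSeries.mk fun n =>
    (Nat.card {π : Equiv.Perm (Fin n) // pat132.ContainsOnce π ∧ p.Avoids π} : ℚ)

/-- `Φ_τ(x)`: generating function for permutations containing both 1-3-2 and `p`
exactly once. -/
noncomputable def Phigen {k : ℕ} (p : GenPattern k) : PowerSeries ℚ :=
  PowerSeries.mk fun n =>
    (Nat.card {π : Equiv.Perm (Fin n) // pat132.ContainsOnce π ∧ p.ContainsOnce π} : ℚ)

/-- `G_β^φ(x)`: generating function for permutations avoiding 1-3-2 and `φ` and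
containing `β` exactly once. -/
noncomputable def Ggen2 {k l : ℕ} (β : GenPattern k) (φ : GenPattern l) : PowerSeries ℚ :=
  PowerSeries.mk fun n =>
    (Nat.card {π : Equiv.Perm (Fin n) //
      pat132.Avoids π ∧ φ.Avoids π ∧ β.ContainsOnce π} : ℚ)

/-- `V k = x^(k/2) · U_k(1/(2√x))`, the rescaled Chebyshev polynomials of the
second kind: `V 0 = V 1 = 1`, `V (k+2) = V (k+1) - x · V k`. -/
noncomputable def V : ℕ → PowerSeries ℚ
  | 0 => 1
  | 1 => 1
  | (k + 2) => V (k + 1) - PowerSeries.X * V k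

/-- Position `i` is a right-to-left maximum of `φ`. -/
def IsRLMax {k : ℕ} (φ : Equiv.Perm (Fin k)) (i : Fin k) : Prop :=
  ∀ j : Fin k, i < j → φ j < φ i

/-- `ρ` is the order-isomorphic reduction of the contiguous segment of `τ` of
length `t` starting at position `s` (adjacency requirements restricted to the
segment and shifted accordingly). -/
def IsReduction {k t : ℕ} (τ : GenPattern k) (s : ℕ) (ρ : GenPattern t) : Prop :=
  s + t ≤ k ∧
  (∀ (a b : Fin t) (ha : s + (a : ℕ) < k) (hb : s + (b : ℕ) < k),
    (ρ.perm a < ρ.perm b ↔ τ.perm ⟨s + a, ha⟩ < τ.perm ⟨s + b, hb⟩)) ∧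
  (∀ j : ℕ, j ∈ ρ.adj ↔ (s + j) ∈ τ.adj ∧ j + 1 < t)

-- ////// auxiliary development //////

abbrev sg (k : ℕ) : GenPattern k := ⟨1, ({0} : Set ℕ)⟩

section Card

lemma card_one_iff_existsUnique {γ : Type*} [Finite γ] {p : γ → Prop} :
    Nat.card {x // p x} = 1 ↔ (∃! x, p x) := by
  rw [Nat.card_eq_one_iff_exists]
  constructor
  · rintro ⟨⟨x, hx⟩, hu⟩
    exact ⟨x, hx, fun y hy => congrArg Subtype.val (hu ⟨y, hy⟩)⟩
  · rintro ⟨x, hx, hu⟩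
    exact ⟨⟨x, hx⟩, fun ⟨y, hy⟩ => Subtype.ext (hu y hy)⟩

lemma card_zero_iff_not_exists {γ : Type*} [Finite γ] {p : γ → Prop} :
    Nat.card {x // p x} = 0 ↔ ¬ ∃ x, p x := by
  rw [Nat.card_eq_zero]
  constructor
  · rintro (h | h)
    · rintro ⟨x, hx⟩; exact h.elim ⟨x, hx⟩
    · exact absurd (Finite.of_injective (Subtype.val) Subtype.val_injective) h.not_finite
  · intro h; left; exact ⟨fun ⟨x, hx⟩ => h ⟨x, hx⟩⟩

lemma card_or_disjoint {γ : Type*} [Finite γ] {p q : γ → Prop}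
    (h : ∀ x, ¬ (p x ∧ q x)) :
    Nat.card {x // p x ∨ q x} = Nat.card {x // p x} + Nat.card {x // q x} := by
  classical
  rw [← Nat.card_sum]
  symm
  apply Nat.card_eq_of_bijective (fun s => Sum.elim
    (fun a => (⟨a.1, Or.inl a.2⟩ : {x // p x ∨ q x}))
    (fun b => (⟨b.1, Or.inr b.2⟩ : {x // p x ∨ q x})) s)
  constructor
  · rintro (⟨a, ha⟩ | ⟨a, ha⟩) (⟨b, hb⟩ | ⟨b, hb⟩) hab <;>
      simp only [Sum.elim_inl, Sum.elim_inr, Subtype.mk.injEq] at hab <;> subst hab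
    · rfl
    · exact absurd ⟨ha, hb⟩ (h a)
    · exact absurd ⟨hb, ha⟩ (h a)
    · rfl
  · rintro ⟨x, (hx | hx)⟩
    · exact ⟨Sum.inl ⟨x, hx⟩, rfl⟩
    · exact ⟨Sum.inr ⟨x, hx⟩, rfl⟩

end Card

section OccBasics

variable {n k : ℕ} (π : Equiv.Perm (Fin n))

lemma cond2_one_iff (f : Fin k → Fin n) :
    (∀ a b : Fin k, π (f a) < π (f b) ↔ (1 : Equiv.Perm (Fin k)) a < (1 : Equiv.Perm (Fin k)) b)
      ↔ StrictMono (fun t => π (f t)) := by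
  simp only [Equiv.Perm.coe_one, id_eq]
  constructor
  · intro h a b hab; exact (h a b).2 hab
  · intro h a b
    constructor
    · intro hlt
      rcases lt_trichotomy a b with hc | hc | hc
      · exact hc
      · subst hc; exact absurd hlt (lt_irrefl _)
      · exact absurd (h hc) (not_lt_of_gt hlt)
    · exact fun hab => h hab

lemma occ_sg_iff (f : Fin k → Fin n) :
    (sg k).Occ π f ↔ StrictMono f ∧ StrictMono (fun t => π (f t)) ∧
      (∀ h1 : 1 < k, (f ⟨1, h1⟩ : ℕ) = (f ⟨0, by omega⟩ : ℕ) + 1) := by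
  unfold GenPattern.Occ
  rw [cond2_one_iff]
  constructor
  · rintro ⟨h1, h2, h3⟩
    exact ⟨h1, h2, fun hk => h3 0 rfl hk⟩
  · rintro ⟨h1, h2, h3⟩
    refine ⟨h1, h2, ?_⟩
    intro j hj hjk
    have : j = 0 := hj
    subst this
    exact h3 hjk

lemma occ132_iff (f : Fin 3 → Fin n) :
    pat132.Occ π f ↔ StrictMono f ∧ π (f 0) < π (f 2) ∧ π (f 2) < π (f 1) := by
  unfold GenPattern.Occ pat132
  constructor
  · rintro ⟨h1, h2, _⟩
    refine ⟨h1, ?_, ?_⟩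
    · exact (h2 0 2).2 (by decide)
    · exact (h2 2 1).2 (by decide)
  · rintro ⟨h1, h2, h3⟩
    refine ⟨h1, ?_, ?_⟩
    · intro a b
      have h02 : (π (f 0) : ℕ) < π (f 2) := h2
      have h21 : (π (f 2) : ℕ) < π (f 1) := h3
      fin_cases a <;> fin_cases b <;>
        simp only [Fin.lt_def] <;>
        first
          | (constructor <;> (intro h; omega))
          | (simp [Equiv.swap_apply_def]; omega)
    · intro j hj; exact absurd hj (by simp [pat132])

end OccBasics


section Ins

variable {m : ℕ}

def insFun (a : ℕ) (ha : a ≤ m) (α : Equiv.Perm (Fin a)) (β : Equiv.Perm (Fin (m - a)))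
    (i : Fin (m + 1)) : Fin (m + 1) :=
  if h : (i : ℕ) < a then ⟨(m - a) + (α ⟨i, h⟩ : ℕ), by have := (α ⟨i, h⟩).isLt; omega⟩
  else if h2 : (i : ℕ) = a then ⟨m, by omega⟩
  else ⟨(β ⟨(i : ℕ) - a - 1, by have := i.isLt; omega⟩ : ℕ), by
    have := (β ⟨(i : ℕ) - a - 1, by have := i.isLt; omega⟩).isLt; omega⟩

variable {a : ℕ} (ha : a ≤ m) (α : Equiv.Perm (Fin a)) (β : Equiv.Perm (Fin (m - a)))

lemma insFun_left {i : Fin (m + 1)} (h : (i : ℕ) < a) :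
    (insFun a ha α β i : ℕ) = (m - a) + (α ⟨i, h⟩ : ℕ) := by
  simp only [insFun, dif_pos h]

lemma insFun_mid {i : Fin (m + 1)} (h : (i : ℕ) = a) :
    (insFun a ha α β i : ℕ) = m := by
  simp only [insFun, dif_neg (by omega : ¬ (i : ℕ) < a), dif_pos h]

lemma insFun_right {i : Fin (m + 1)} (h : a < (i : ℕ)) (hb : (i : ℕ) - a - 1 < m - a) :
    (insFun a ha α β i : ℕ) = (β ⟨(i : ℕ) - a - 1, hb⟩ : ℕ) := by
  simp only [insFun, dif_neg (by omega : ¬ (i : ℕ) < a), dif_neg (by omega : ¬ (i : ℕ) = a)]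

lemma insFun_left_bounds {i : Fin (m + 1)} (h : (i : ℕ) < a) :
    m - a ≤ (insFun a ha α β i : ℕ) ∧ (insFun a ha α β i : ℕ) < m := by
  rw [insFun_left ha α β h]
  have := (α ⟨i, h⟩).isLt
  omega

lemma insFun_right_lt {i : Fin (m + 1)} (h : a < (i : ℕ)) :
    (insFun a ha α β i : ℕ) < m - a := by
  have hb : (i : ℕ) - a - 1 < m - a := by have := i.isLt; omega
  rw [insFun_right ha α β h hb]
  exact (β ⟨(i : ℕ) - a - 1, hb⟩).isLt

lemma insFun_injective : Function.Injective (insFun a ha α β) := by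
  intro i j hij
  have hij' : (insFun a ha α β i : ℕ) = (insFun a ha α β j : ℕ) := by rw [hij]
  rcases lt_trichotomy (i : ℕ) a with hi | hi | hi <;>
    rcases lt_trichotomy (j : ℕ) a with hj | hj | hj
  · -- both left
    rw [insFun_left ha α β hi, insFun_left ha α β hj] at hij'
    have : α ⟨i, hi⟩ = α ⟨j, hj⟩ := Fin.ext (by omega)
    have := α.injective this
    exact Fin.ext (by simpa [Fin.ext_iff] using this)
  · have h1 := insFun_left_bounds ha α β hi
    rw [insFun_mid ha α β hj] at hij'; omega
  · have h1 := insFun_left_bounds ha α β hi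
    have h2 := insFun_right_lt ha α β hj; omega
  · have h1 := insFun_left_bounds ha α β hj
    rw [insFun_mid ha α β hi] at hij'; omega
  · exact Fin.ext (by omega)
  · rw [insFun_mid ha α β hi] at hij'
    have h2 := insFun_right_lt ha α β hj; omega
  · have h1 := insFun_left_bounds ha α β hj
    have h2 := insFun_right_lt ha α β hi; omega
  · rw [insFun_mid ha α β hj] at hij'
    have h2 := insFun_right_lt ha α β hi; omega
  · -- both right
    have hbi : (i : ℕ) - a - 1 < m - a := by have := i.isLt; omega
    have hbj : (j : ℕ) - a - 1 < m - a := by have := j.isLt; omega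
    rw [insFun_right ha α β hi hbi, insFun_right ha α β hj hbj] at hij'
    have : β ⟨(i : ℕ) - a - 1, hbi⟩ = β ⟨(j : ℕ) - a - 1, hbj⟩ := Fin.ext (by omega)
    have := β.injective this
    simp only [Fin.mk.injEq] at this
    exact Fin.ext (by omega)

noncomputable def ins : Equiv.Perm (Fin (m + 1)) :=
  Equiv.ofBijective (insFun a ha α β)
    ((Finite.injective_iff_bijective).1 (insFun_injective ha α β))

lemma ins_apply (i : Fin (m + 1)) : ins ha α β i = insFun a ha α β i := rfl

end Ins

section InsOcc

variable {m a : ℕ}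

def eL (ha : a ≤ m) (x : Fin a) : Fin (m + 1) := ⟨x, by have := x.isLt; omega⟩

def eR (x : Fin (m - a)) : Fin (m + 1) := ⟨a + 1 + x, by have := x.isLt; omega⟩

variable (ha : a ≤ m) (α : Equiv.Perm (Fin a)) (β : Equiv.Perm (Fin (m - a)))

lemma ins_eL (x : Fin a) : (ins ha α β (eL ha x) : ℕ) = (m - a) + (α x : ℕ) := by
  rw [ins_apply, insFun_left ha α β (show ((eL ha x : Fin (m+1)) : ℕ) < a from x.isLt)]
  rfl

lemma ins_eR (x : Fin (m - a)) : (ins ha α β (eR x) : ℕ) = (β x : ℕ) := by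
  have hx := x.isLt
  have h1 : a < ((eR x : Fin (m+1)) : ℕ) := by simp only [eR]; omega
  have hb : ((eR x : Fin (m+1)) : ℕ) - a - 1 < m - a := by simp only [eR]; omega
  rw [ins_apply, insFun_right ha α β h1 hb]
  congr 2
  exact Fin.ext (by simp only [eR]; omega)

lemma strictMono_eL {kk : ℕ} (g : Fin kk → Fin a) :
    StrictMono (fun t => eL ha (g t)) ↔ StrictMono g := by
  constructor
  · intro h x y hxy
    have := h hxy
    rw [Fin.lt_def] at this ⊢
    exact this
  · intro h x y hxy
    have := h hxy
    rw [Fin.lt_def] at this ⊢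
    exact this

lemma strictMono_eR {kk : ℕ} (g : Fin kk → Fin (m - a)) :
    StrictMono (fun t => eR (g t) : Fin kk → Fin (m+1)) ↔ StrictMono g := by
  constructor
  · intro h x y hxy
    have := h hxy
    rw [Fin.lt_def] at this ⊢
    simp only [eR] at this
    omega
  · intro h x y hxy
    have := h hxy
    rw [Fin.lt_def] at this ⊢
    simp only [eR]
    omega

lemma ins_lt_left {x y : Fin a} :
    ins ha α β (eL ha x) < ins ha α β (eL ha y) ↔ α x < α y := by
  rw [Fin.lt_def, Fin.lt_def, ins_eL, ins_eL]
  omega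

lemma ins_lt_right {x y : Fin (m - a)} :
    ins ha α β (eR x) < ins ha α β (eR y) ↔ β x < β y := by
  rw [Fin.lt_def, Fin.lt_def, ins_eR, ins_eR]

lemma occ132_eL (g : Fin 3 → Fin a) :
    pat132.Occ (ins ha α β) (fun t => eL ha (g t)) ↔ pat132.Occ α g := by
  rw [occ132_iff, occ132_iff, strictMono_eL, ins_lt_left, ins_lt_left]

lemma occ132_eR (g : Fin 3 → Fin (m - a)) :
    pat132.Occ (ins ha α β) (fun t => eR (g t)) ↔ pat132.Occ β g := by
  rw [occ132_iff, occ132_iff, strictMono_eR, ins_lt_right, ins_lt_right]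

lemma ins_exists132 :
    (∃ f, pat132.Occ (ins ha α β) f) ↔ (∃ g, pat132.Occ α g) ∨ (∃ g, pat132.Occ β g) := by
  constructor
  · rintro ⟨f, hf⟩
    rw [occ132_iff] at hf
    obtain ⟨hsm, h02, h21⟩ := hf
    have hv1 := (ins ha α β (f 1)).isLt
    have h01 : f 0 < f 1 := hsm (by decide)
    have h12 : f 1 < f 2 := hsm (by decide)
    rcases lt_trichotomy ((f 0 : Fin (m+1)) : ℕ) a with h0 | h0 | h0
    · -- all in the left block
      have hb0 := insFun_left_bounds ha α β h0
      rw [← ins_apply] at hb0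
      have h2 : ((f 2 : Fin (m+1)) : ℕ) < a := by
        rcases lt_trichotomy ((f 2 : Fin (m+1)) : ℕ) a with h | h | h
        · exact h
        · have := insFun_mid ha α β h
          rw [← ins_apply] at this
          rw [Fin.lt_def] at h21; omega
        · have := insFun_right_lt ha α β h
          rw [← ins_apply] at this
          rw [Fin.lt_def] at h02; omega
      have h1 : ((f 1 : Fin (m+1)) : ℕ) < a := by
        rw [Fin.lt_def] at h12; omega
      left
      have hall : ∀ t : Fin 3, ((f t : Fin (m+1)) : ℕ) < a := by
        intro t; fin_cases t <;> assumption
      refine ⟨fun t => ⟨(f t : ℕ), hall t⟩, ?_⟩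
      have hfe : f = fun t => eL ha ⟨(f t : ℕ), hall t⟩ := funext fun t => Fin.ext rfl
      rw [← occ132_eL ha α β, ← hfe, occ132_iff]
      exact ⟨hsm, h02, h21⟩
    · -- f 0 at the max position: impossible
      have := insFun_mid ha α β h0
      rw [← ins_apply] at this
      rw [Fin.lt_def] at h02
      omega
    · -- all in the right block
      have hall : ∀ t : Fin 3, a < ((f t : Fin (m+1)) : ℕ) := by
        intro t
        have hle : f 0 ≤ f t := hsm.monotone (Fin.zero_le t)
        rw [Fin.le_def] at hle
        omega
      right
      have hlt : ∀ t : Fin 3, ((f t : Fin (m+1)) : ℕ) - a - 1 < m - a := by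
        intro t; have := (f t).isLt; have := hall t; omega
      refine ⟨fun t => ⟨(f t : ℕ) - a - 1, hlt t⟩, ?_⟩
      have hfe : f = fun t => eR ⟨(f t : ℕ) - a - 1, hlt t⟩ := by
        funext t
        refine Fin.ext ?_
        simp only [eR]
        have := hall t
        omega
      rw [← occ132_eR ha α β, ← hfe, occ132_iff]
      exact ⟨hsm, h02, h21⟩
  · rintro (⟨g, hg⟩ | ⟨g, hg⟩)
    · exact ⟨_, (occ132_eL ha α β g).2 hg⟩
    · exact ⟨_, (occ132_eR ha α β g).2 hg⟩

end InsOcc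

def extFun {m a kk : ℕ} (ha : a ≤ m) (g : Fin kk → Fin a) (t : Fin (kk + 1)) : Fin (m + 1) :=
  if h : (t : ℕ) < kk then eL ha (g ⟨t, h⟩) else ⟨a, by omega⟩

lemma extFun_lt {m a kk : ℕ} (ha : a ≤ m) (g : Fin kk → Fin a) {t : Fin (kk+1)}
    (h : (t : ℕ) < kk) : extFun ha g t = eL ha (g ⟨t, h⟩) := dif_pos h

lemma extFun_last {m a kk : ℕ} (ha : a ≤ m) (g : Fin kk → Fin a) {t : Fin (kk+1)}
    (h : (t : ℕ) = kk) : (extFun ha g t : ℕ) = a := by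
  rw [extFun, dif_neg (by omega)]

section InsSg

variable {m a : ℕ} (ha : a ≤ m) (α : Equiv.Perm (Fin a)) (β : Equiv.Perm (Fin (m - a)))

lemma ins_val_left {i : Fin (m+1)} (h : (i : ℕ) < a) :
    m - a ≤ (ins ha α β i : ℕ) ∧ (ins ha α β i : ℕ) < m := by
  rw [ins_apply]; exact insFun_left_bounds ha α β h

lemma ins_val_mid {i : Fin (m+1)} (h : (i : ℕ) = a) : (ins ha α β i : ℕ) = m := by
  rw [ins_apply]; exact insFun_mid ha α β h

lemma ins_val_right {i : Fin (m+1)} (h : a < (i : ℕ)) : (ins ha α β i : ℕ) < m - a := by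
  rw [ins_apply]; exact insFun_right_lt ha α β h

lemma occ_sg_eL {kk : ℕ} (g : Fin kk → Fin a) :
    (sg kk).Occ (ins ha α β) (fun t => eL ha (g t)) ↔ (sg kk).Occ α g := by
  rw [occ_sg_iff, occ_sg_iff, strictMono_eL]
  refine and_congr Iff.rfl (and_congr ?_ ?_)
  · constructor <;> intro h x y hxy <;> have := h hxy
    · exact (ins_lt_left ha α β).1 this
    · exact (ins_lt_left ha α β).2 this
  · exact Iff.rfl

lemma occ_sg_eR {kk : ℕ} (g : Fin kk → Fin (m - a)) :
    (sg kk).Occ (ins ha α β) (fun t => eR (g t)) ↔ (sg kk).Occ β g := by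
  rw [occ_sg_iff, occ_sg_iff, strictMono_eR]
  refine and_congr Iff.rfl (and_congr ?_ ?_)
  · constructor <;> intro h x y hxy <;> have := h hxy
    · exact (ins_lt_right ha α β).1 this
    · exact (ins_lt_right ha α β).2 this
  · apply forall_congr'
    intro h1
    show (eR (g ⟨1, h1⟩) : ℕ) = (eR (g ⟨0, by omega⟩) : ℕ) + 1 ↔
      (g ⟨1, h1⟩ : ℕ) = (g ⟨0, by omega⟩ : ℕ) + 1
    simp only [eR]
    omega

lemma occ_sg_ext {kk : ℕ} (hkk : 2 ≤ kk) (g : Fin kk → Fin a) :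
    (sg (kk+1)).Occ (ins ha α β) (extFun ha g) ↔ (sg kk).Occ α g := by
  rw [occ_sg_iff, occ_sg_iff]
  constructor
  · rintro ⟨hsm, hvm, hadj⟩
    refine ⟨?_, ?_, ?_⟩
    · intro x y hxy
      have hx : ((⟨(x : ℕ), by omega⟩ : Fin (kk+1)) : ℕ) < kk := x.isLt
      have hy : ((⟨(y : ℕ), by omega⟩ : Fin (kk+1)) : ℕ) < kk := y.isLt
      have := hsm (show (⟨(x : ℕ), by omega⟩ : Fin (kk+1)) < ⟨(y : ℕ), by omega⟩ from hxy)
      rw [extFun_lt ha g hx, extFun_lt ha g hy] at this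
      rw [Fin.lt_def] at this ⊢
      exact this
    · intro x y hxy
      have hx : ((⟨(x : ℕ), by omega⟩ : Fin (kk+1)) : ℕ) < kk := x.isLt
      have hy : ((⟨(y : ℕ), by omega⟩ : Fin (kk+1)) : ℕ) < kk := y.isLt
      have := hvm (show (⟨(x : ℕ), by omega⟩ : Fin (kk+1)) < ⟨(y : ℕ), by omega⟩ from hxy)
      simp only [extFun_lt ha g hx, extFun_lt ha g hy] at this
      exact (ins_lt_left ha α β).1 this
    · intro h1
      have h1' : 1 < kk + 1 := by omega
      have := hadj h1'
      rw [show extFun ha g ⟨1, h1'⟩ = eL ha (g ⟨1, h1⟩) from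
          extFun_lt ha g (by show (1:ℕ) < kk; omega),
        show extFun ha g ⟨0, by omega⟩ = eL ha (g ⟨0, by omega⟩) from
          extFun_lt ha g (by show (0:ℕ) < kk; omega)] at this
      exact this
  · rintro ⟨hsm, hvm, hadj⟩
    refine ⟨?_, ?_, ?_⟩
    · intro x y hxy
      rw [Fin.lt_def] at hxy
      by_cases hy : (y : ℕ) < kk
      · have hx : (x : ℕ) < kk := by omega
        rw [extFun_lt ha g hx, extFun_lt ha g hy]
        have : (⟨(x : ℕ), hx⟩ : Fin kk) < ⟨(y : ℕ), hy⟩ := hxy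
        have := hsm this
        rw [Fin.lt_def] at this ⊢
        exact this
      · have hx : (x : ℕ) < kk := by have := y.isLt; omega
        rw [Fin.lt_def]
        rw [show (extFun ha g x : ℕ) = (eL ha (g ⟨x, hx⟩) : ℕ) from
          congrArg _ (extFun_lt ha g hx), extFun_last ha g (by have := y.isLt; omega)]
        exact (g ⟨x, hx⟩).isLt
    · intro x y hxy
      rw [Fin.lt_def] at hxy
      by_cases hy : (y : ℕ) < kk
      · have hx : (x : ℕ) < kk := by omega
        show ins ha α β (extFun ha g x) < ins ha α β (extFun ha g y)
        rw [extFun_lt ha g hx, extFun_lt ha g hy]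
        exact (ins_lt_left ha α β).2 (hvm (show (⟨(x : ℕ), hx⟩ : Fin kk) < ⟨(y : ℕ), hy⟩ from hxy))
      · have hx : (x : ℕ) < kk := by have := y.isLt; omega
        show ins ha α β (extFun ha g x) < ins ha α β (extFun ha g y)
        rw [extFun_lt ha g hx]
        have hyv : (extFun ha g y : ℕ) = a := extFun_last ha g (by have := y.isLt; omega)
        rw [Fin.lt_def]
        have h1 := (ins_val_left ha α β (show ((eL ha (g ⟨x, hx⟩) : Fin (m+1)) : ℕ) < a from
          (g ⟨x, hx⟩).isLt)).2
        have h2 := ins_val_mid ha α β hyv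
        omega
    · intro h1
      have := hadj (by omega : 1 < kk)
      rw [show extFun ha g ⟨1, h1⟩ = eL ha (g ⟨1, by omega⟩) from
          extFun_lt ha g (by show (1:ℕ) < kk; omega),
        show extFun ha g ⟨0, by omega⟩ = eL ha (g ⟨0, by omega⟩) from
          extFun_lt ha g (by show (0:ℕ) < kk; omega)]
      exact this

lemma exists_occ_sg_of_succ {n kk : ℕ} {π : Equiv.Perm (Fin n)} :
    (∃ f, (sg (kk+1)).Occ π f) → (∃ f, (sg kk).Occ π f) := by
  rintro ⟨f, hf⟩
  rw [occ_sg_iff] at hf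
  obtain ⟨hsm, hvm, hadj⟩ := hf
  refine ⟨fun t => f ⟨t, by omega⟩, ?_⟩
  rw [occ_sg_iff]
  refine ⟨?_, ?_, ?_⟩
  · intro x y hxy
    exact hsm (show (⟨(x : ℕ), by omega⟩ : Fin (kk+1)) < ⟨(y : ℕ), by omega⟩ from hxy)
  · intro x y hxy
    exact hvm (show (⟨(x : ℕ), by omega⟩ : Fin (kk+1)) < ⟨(y : ℕ), by omega⟩ from hxy)
  · intro h1
    exact hadj (by omega)

end InsSg

section InsCount

variable {m a : ℕ} (ha : a ≤ m) (α : Equiv.Perm (Fin a)) (β : Equiv.Perm (Fin (m - a)))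

lemma card_occ_left (kk : ℕ) :
    Nat.card {f : Fin (kk+2) → Fin (m+1) //
      (sg (kk+2)).Occ (ins ha α β) f ∧ ((f (Fin.last (kk+1)) : Fin (m+1)) : ℕ) < a} =
    Nat.card {g : Fin (kk+2) → Fin a // (sg (kk+2)).Occ α g} := by
  symm
  apply Nat.card_eq_of_bijective (fun s =>
    ⟨fun t => eL ha (s.1 t), (occ_sg_eL ha α β s.1).2 s.2, (s.1 (Fin.last (kk+1))).isLt⟩)
  constructor
  · intro s1 s2 h
    apply Subtype.ext
    funext t
    have h2 : eL ha (s1.1 t) = eL ha (s2.1 t) := congrFun (congrArg Subtype.val h) t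
    have h3 := congrArg Fin.val h2
    exact Fin.ext h3
  · rintro ⟨f, hocc, hlast⟩
    have hsm := ((occ_sg_iff _ f).1 hocc).1
    have hall : ∀ t, (f t : ℕ) < a := by
      intro t
      have hle : f t ≤ f (Fin.last (kk+1)) := hsm.monotone (Fin.le_last t)
      rw [Fin.le_def] at hle
      omega
    have hfe : f = fun t => eL ha ⟨(f t : ℕ), hall t⟩ := funext fun t => Fin.ext rfl
    refine ⟨⟨fun t => ⟨(f t : ℕ), hall t⟩, (occ_sg_eL ha α β _).1 (hfe ▸ hocc)⟩, ?_⟩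
    apply Subtype.ext
    exact hfe.symm

lemma card_occ_right (kk : ℕ) :
    Nat.card {f : Fin (kk+2) → Fin (m+1) //
      (sg (kk+2)).Occ (ins ha α β) f ∧ a < ((f (Fin.last (kk+1)) : Fin (m+1)) : ℕ)} =
    Nat.card {g : Fin (kk+2) → Fin (m - a) // (sg (kk+2)).Occ β g} := by
  symm
  apply Nat.card_eq_of_bijective (fun s =>
    ⟨fun t => eR (s.1 t), (occ_sg_eR ha α β s.1).2 s.2, by
      show a < a + 1 + (s.1 (Fin.last (kk+1)) : ℕ); omega⟩)
  constructor
  · intro s1 s2 h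
    apply Subtype.ext
    funext t
    have h2 : eR (s1.1 t) = eR (s2.1 t) := congrFun (congrArg Subtype.val h) t
    have h3 := congrArg Fin.val h2
    simp only [eR] at h3
    exact Fin.ext (by omega)
  · rintro ⟨f, hocc, hlast⟩
    obtain ⟨hsm, hvm, hadj⟩ := (occ_sg_iff _ f).1 hocc
    have hall : ∀ t, a < (f t : ℕ) := by
      intro t
      by_contra hle
      push_neg at hle
      have htlt : (t : ℕ) < kk + 1 := by
        rcases Nat.lt_or_ge (t : ℕ) (kk+1) with h | h
        · exact h
        · exfalso
          have : t = Fin.last (kk+1) := Fin.ext (by have := t.isLt; simp only [Fin.val_last]; omega)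
          rw [this] at hle; omega
      have hlt : t < Fin.last (kk+1) := by
        rw [Fin.lt_def]; simp only [Fin.val_last]; omega
      have hv : ((ins ha α β (f t) : Fin (m+1)) : ℕ) <
          ((ins ha α β (f (Fin.last (kk+1))) : Fin (m+1)) : ℕ) := hvm hlt
      have hvr := ins_val_right ha α β hlast
      rcases Nat.lt_or_ge (f t : ℕ) a with h | h
      · have := (ins_val_left ha α β h).1; omega
      · have hfa : (f t : ℕ) = a := by omega
        have := ins_val_mid ha α β hfa; omega
    have hb : ∀ t, (f t : ℕ) - a - 1 < m - a := by
      intro t; have := (f t).isLt; have := hall t; omega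
    have hfe : f = fun t => eR ⟨(f t : ℕ) - a - 1, hb t⟩ := by
      funext t
      refine Fin.ext ?_
      show ((f t : Fin (m+1)) : ℕ) = a + 1 + ((f t : ℕ) - a - 1)
      have := hall t
      omega
    refine ⟨⟨fun t => ⟨(f t : ℕ) - a - 1, hb t⟩, (occ_sg_eR ha α β _).1 (hfe ▸ hocc)⟩, ?_⟩
    apply Subtype.ext
    exact hfe.symm

lemma card_occ_mid (kk : ℕ) :
    Nat.card {f : Fin (kk+3) → Fin (m+1) //
      (sg (kk+3)).Occ (ins ha α β) f ∧ ((f (Fin.last (kk+2)) : Fin (m+1)) : ℕ) = a} =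
    Nat.card {g : Fin (kk+2) → Fin a // (sg (kk+2)).Occ α g} := by
  symm
  apply Nat.card_eq_of_bijective (fun s =>
    ⟨extFun ha s.1, (occ_sg_ext ha α β (by omega) s.1).2 s.2,
      extFun_last ha s.1 (by simp)⟩)
  constructor
  · intro s1 s2 h
    apply Subtype.ext
    funext t
    have h2 : extFun ha s1.1 ⟨(t : ℕ), by omega⟩ = extFun ha s2.1 ⟨(t : ℕ), by omega⟩ :=
      congrFun (congrArg Subtype.val h) ⟨(t : ℕ), by omega⟩
    rw [extFun_lt ha s1.1 (show ((⟨(t : ℕ), by omega⟩ : Fin (kk+3)) : ℕ) < kk + 2 from t.isLt),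
      extFun_lt ha s2.1 (show ((⟨(t : ℕ), by omega⟩ : Fin (kk+3)) : ℕ) < kk + 2 from t.isLt)] at h2
    have h3 := congrArg Fin.val h2
    exact Fin.ext h3
  · rintro ⟨f, hocc, hlast⟩
    obtain ⟨hsm, hvm, hadj⟩ := (occ_sg_iff _ f).1 hocc
    have hall : ∀ t : Fin (kk+3), (t : ℕ) < kk + 2 → (f t : ℕ) < a := by
      intro t ht
      have hlt : t < Fin.last (kk+2) := by
        rw [Fin.lt_def]; simp only [Fin.val_last]; omega
      have := hsm hlt
      rw [Fin.lt_def] at this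
      omega
    have hfe : f = extFun ha (fun t : Fin (kk+2) =>
        (⟨(f ⟨(t : ℕ), by omega⟩ : ℕ), hall ⟨(t : ℕ), by omega⟩ t.isLt⟩ : Fin a)) := by
      funext t
      by_cases ht : (t : ℕ) < kk + 2
      · rw [extFun_lt ha _ ht]
        exact Fin.ext rfl
      · refine Fin.ext ?_
        rw [extFun_last ha _ (by have := t.isLt; omega)]
        have h3 : t = Fin.last (kk+2) := Fin.ext (by have := t.isLt; simp only [Fin.val_last]; omega)
        rw [h3]
        exact hlast
    refine ⟨⟨fun t : Fin (kk+2) =>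
      (⟨(f ⟨(t : ℕ), by omega⟩ : ℕ), hall ⟨(t : ℕ), by omega⟩ t.isLt⟩ : Fin a),
      (occ_sg_ext ha α β (by omega) _).1 (hfe ▸ hocc)⟩, ?_⟩
    apply Subtype.ext
    exact hfe.symm

lemma card_occ_mid2 :
    Nat.card {f : Fin 2 → Fin (m+1) //
      (sg 2).Occ (ins ha α β) f ∧ ((f (Fin.last 1) : Fin (m+1)) : ℕ) = a} =
    if 0 < a then 1 else 0 := by
  by_cases h0 : 0 < a
  · rw [if_pos h0, card_one_iff_existsUnique]
    refine ⟨fun t : Fin 2 => (⟨a - 1 + (t : ℕ), by have := t.isLt; omega⟩ : Fin (m+1)),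
      ⟨?_, ?_⟩, ?_⟩
    · rw [occ_sg_iff]
      refine ⟨?_, ?_, ?_⟩
      · intro x y hxy
        rw [Fin.lt_def] at hxy ⊢
        show a - 1 + (x : ℕ) < a - 1 + (y : ℕ)
        omega
      · intro x y hxy
        rw [Fin.lt_def] at hxy
        have hx : (x : ℕ) = 0 := by omega
        have hy : (y : ℕ) = 1 := by omega
        rw [Fin.lt_def]
        show ((ins ha α β ⟨a - 1 + (x : ℕ), by have := x.isLt; omega⟩ : Fin (m+1)) : ℕ) <
          ((ins ha α β ⟨a - 1 + (y : ℕ), by have := y.isLt; omega⟩ : Fin (m+1)) : ℕ)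
        have h1 : ((ins ha α β ⟨a - 1 + (x : ℕ), by have := x.isLt; omega⟩ : Fin (m+1)) : ℕ) < m :=
          (ins_val_left ha α β (by show a - 1 + (x : ℕ) < a; omega)).2
        have h2 : ((ins ha α β ⟨a - 1 + (y : ℕ), by have := y.isLt; omega⟩ : Fin (m+1)) : ℕ) = m :=
          ins_val_mid ha α β (by show a - 1 + (y : ℕ) = a; omega)
        exact lt_of_lt_of_eq h1 h2.symm
      · intro h1
        show a - 1 + (1 : ℕ) = a - 1 + (0 : ℕ) + 1
        omega
    · show a - 1 + (1 : ℕ) = a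
      omega
    · rintro f ⟨hocc, hlast⟩
      obtain ⟨hsm, hvm, hadj⟩ := (occ_sg_iff _ f).1 hocc
      have hadj1 : ((f (Fin.last 1) : Fin (m+1)) : ℕ) = ((f ⟨0, by omega⟩ : Fin (m+1)) : ℕ) + 1 :=
        hadj (by omega)
      funext t
      refine Fin.ext ?_
      show ((f t : Fin (m+1)) : ℕ) = a - 1 + (t : ℕ)
      rcases (by omega : (t : ℕ) = 0 ∨ (t : ℕ) = 1) with ht | ht
      · have ht' : t = ⟨0, by omega⟩ := Fin.ext ht
        rw [ht']
        have hval0 : ((f ⟨0, by omega⟩ : Fin (m+1)) : ℕ) = a - 1 + 0 := by omega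
        exact hval0
      · have ht' : t = Fin.last 1 := Fin.ext (by rw [ht]; rfl)
        rw [ht']
        have hval1 : ((f (Fin.last 1) : Fin (m+1)) : ℕ) = a - 1 + 1 := by omega
        exact hval1
  · rw [if_neg h0, card_zero_iff_not_exists]
    rintro ⟨f, hocc, hlast⟩
    obtain ⟨hsm, hvm, hadj⟩ := (occ_sg_iff _ f).1 hocc
    have h01 : (⟨0, by omega⟩ : Fin 2) < Fin.last 1 := by
      rw [Fin.lt_def]; simp only [Fin.val_last]; omega
    have := hsm h01
    rw [Fin.lt_def] at this
    omega

end InsCount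

section Nocc

noncomputable def Nocc {k n : ℕ} (p : GenPattern k) (π : Equiv.Perm (Fin n)) : ℕ :=
  Nat.card {f : Fin k → Fin n // p.Occ π f}

lemma avoids_iff_nocc {k n : ℕ} (p : GenPattern k) (π : Equiv.Perm (Fin n)) :
    p.Avoids π ↔ Nocc p π = 0 := by
  rw [Nocc, card_zero_iff_not_exists]
  rfl

lemma containsOnce_iff_nocc {k n : ℕ} (p : GenPattern k) (π : Equiv.Perm (Fin n)) :
    p.ContainsOnce π ↔ Nocc p π = 1 := by
  rw [Nocc, card_one_iff_existsUnique]
  rfl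

lemma nocc_succ_zero {n kk : ℕ} {π : Equiv.Perm (Fin n)} (h : Nocc (sg kk) π = 0) :
    Nocc (sg (kk+1)) π = 0 := by
  rw [Nocc, card_zero_iff_not_exists] at h ⊢
  intro hex
  exact h (exists_occ_sg_of_succ hex)

lemma nocc_empty {k : ℕ} (hk : 1 ≤ k) (α : Equiv.Perm (Fin 0)) : Nocc (sg k) α = 0 := by
  rw [Nocc, card_zero_iff_not_exists]
  rintro ⟨f, -⟩
  exact (f ⟨0, by omega⟩).elim0

lemma nocc132_empty (α : Equiv.Perm (Fin 0)) : Nocc pat132 α = 0 := by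
  rw [Nocc, card_zero_iff_not_exists]
  rintro ⟨f, -⟩
  exact (f 0).elim0

lemma avoids1_iff {a : ℕ} (α : Equiv.Perm (Fin a)) : (sg 1).Avoids α ↔ a = 0 := by
  constructor
  · intro h
    by_contra h0
    refine h ⟨fun _ => ⟨0, by omega⟩, ?_, ?_, ?_⟩
    · intro x y hxy
      exfalso
      rw [Fin.lt_def] at hxy
      have := x.isLt; have := y.isLt
      omega
    · intro x y
      constructor
      · intro hlt; exact absurd hlt (lt_irrefl _)
      · intro hlt
        exfalso
        have hx : x = y := Fin.ext (by have := x.isLt; have := y.isLt; omega)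
        rw [hx] at hlt
        exact absurd hlt (lt_irrefl _)
    · intro j hj hjk
      exfalso
      have : j = 0 := hj
      omega
  · rintro rfl
    rw [avoids_iff_nocc]
    exact nocc_empty le_rfl α

variable {m a : ℕ} (ha : a ≤ m) (α : Equiv.Perm (Fin a)) (β : Equiv.Perm (Fin (m - a)))

lemma card_tri {γ : Type*} [Finite γ] (P : γ → Prop) (v : γ → ℕ) (c : ℕ) :
    Nat.card {x // P x} =
      Nat.card {x // P x ∧ v x < c} + Nat.card {x // P x ∧ v x = c} +
      Nat.card {x // P x ∧ c < v x} := by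
  have hpart : ∀ x, P x ↔ ((P x ∧ v x < c) ∨ ((P x ∧ v x = c) ∨ (P x ∧ c < v x))) := by
    intro x
    constructor
    · intro h
      rcases lt_trichotomy (v x) c with hc | hc | hc
      exacts [Or.inl ⟨h, hc⟩, Or.inr (Or.inl ⟨h, hc⟩), Or.inr (Or.inr ⟨h, hc⟩)]
    · rintro (⟨h, _⟩ | ⟨h, _⟩ | ⟨h, _⟩) <;> exact h
  rw [Nat.card_congr (Equiv.subtypeEquivRight hpart)]
  rw [card_or_disjoint (p := fun x => P x ∧ v x < c) (q := fun x => (P x ∧ v x = c) ∨ (P x ∧ c < v x))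
    (fun x => by rintro ⟨⟨_, h1⟩, (⟨_, h2⟩ | ⟨_, h2⟩)⟩ <;> omega)]
  rw [card_or_disjoint (p := fun x => P x ∧ v x = c) (q := fun x => P x ∧ c < v x)
    (fun x => by rintro ⟨⟨_, h1⟩, ⟨_, h2⟩⟩; omega)]
  omega

lemma nocc_ins_big (kk : ℕ) :
    Nocc (sg (kk+3)) (ins ha α β) =
      Nocc (sg (kk+3)) α + Nocc (sg (kk+2)) α + Nocc (sg (kk+3)) β := by
  have htri :
      Nat.card {f : Fin (kk+3) → Fin (m+1) // (sg (kk+3)).Occ (ins ha α β) f} =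
        Nat.card {f : Fin (kk+3) → Fin (m+1) //
          (sg (kk+3)).Occ (ins ha α β) f ∧ ((f (Fin.last (kk+2)) : Fin (m+1)) : ℕ) < a} +
        Nat.card {f : Fin (kk+3) → Fin (m+1) //
          (sg (kk+3)).Occ (ins ha α β) f ∧ ((f (Fin.last (kk+2)) : Fin (m+1)) : ℕ) = a} +
        Nat.card {f : Fin (kk+3) → Fin (m+1) //
          (sg (kk+3)).Occ (ins ha α β) f ∧ a < ((f (Fin.last (kk+2)) : Fin (m+1)) : ℕ)} :=
    card_tri (fun f => (sg (kk+3)).Occ (ins ha α β) f)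
      (fun f => ((f (Fin.last (kk+2)) : Fin (m+1)) : ℕ)) a
  have hL : Nat.card {f : Fin (kk+3) → Fin (m+1) //
      (sg (kk+3)).Occ (ins ha α β) f ∧ ((f (Fin.last (kk+2)) : Fin (m+1)) : ℕ) < a} =
      Nocc (sg (kk+3)) α := card_occ_left ha α β (kk+1)
  have hM : Nat.card {f : Fin (kk+3) → Fin (m+1) //
      (sg (kk+3)).Occ (ins ha α β) f ∧ ((f (Fin.last (kk+2)) : Fin (m+1)) : ℕ) = a} =
      Nocc (sg (kk+2)) α := card_occ_mid ha α β kk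
  have hR : Nat.card {f : Fin (kk+3) → Fin (m+1) //
      (sg (kk+3)).Occ (ins ha α β) f ∧ a < ((f (Fin.last (kk+2)) : Fin (m+1)) : ℕ)} =
      Nocc (sg (kk+3)) β := card_occ_right ha α β (kk+1)
  have htri2 : Nocc (sg (kk+3)) (ins ha α β) = _ + _ + _ := htri
  rw [htri2, hL, hM, hR]

lemma nocc_ins_two :
    Nocc (sg 2) (ins ha α β) =
      Nocc (sg 2) α + (if 0 < a then 1 else 0) + Nocc (sg 2) β := by
  have htri :
      Nat.card {f : Fin 2 → Fin (m+1) // (sg 2).Occ (ins ha α β) f} =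
        Nat.card {f : Fin 2 → Fin (m+1) //
          (sg 2).Occ (ins ha α β) f ∧ ((f (Fin.last 1) : Fin (m+1)) : ℕ) < a} +
        Nat.card {f : Fin 2 → Fin (m+1) //
          (sg 2).Occ (ins ha α β) f ∧ ((f (Fin.last 1) : Fin (m+1)) : ℕ) = a} +
        Nat.card {f : Fin 2 → Fin (m+1) //
          (sg 2).Occ (ins ha α β) f ∧ a < ((f (Fin.last 1) : Fin (m+1)) : ℕ)} :=
    card_tri (fun f => (sg 2).Occ (ins ha α β) f)
      (fun f => ((f (Fin.last 1) : Fin (m+1)) : ℕ)) a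
  have hL : Nat.card {f : Fin 2 → Fin (m+1) //
      (sg 2).Occ (ins ha α β) f ∧ ((f (Fin.last 1) : Fin (m+1)) : ℕ) < a} =
      Nocc (sg 2) α := card_occ_left ha α β 0
  have hM : Nat.card {f : Fin 2 → Fin (m+1) //
      (sg 2).Occ (ins ha α β) f ∧ ((f (Fin.last 1) : Fin (m+1)) : ℕ) = a} =
      if 0 < a then 1 else 0 := card_occ_mid2 ha α β
  have hR : Nat.card {f : Fin 2 → Fin (m+1) //
      (sg 2).Occ (ins ha α β) f ∧ a < ((f (Fin.last 1) : Fin (m+1)) : ℕ)} =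
      Nocc (sg 2) β := card_occ_right ha α β 0
  have htri2 : Nocc (sg 2) (ins ha α β) = _ + _ + _ := htri
  rw [htri2, hL, hM, hR]

lemma ins_avoids132 :
    pat132.Avoids (ins ha α β) ↔ pat132.Avoids α ∧ pat132.Avoids β := by
  unfold GenPattern.Avoids
  rw [ins_exists132]
  tauto

end Nocc

section Decomp

lemma mk3_strictMono {n : ℕ} {i j l : Fin n} (h1 : i < j) (h2 : j < l) :
    StrictMono (fun t : Fin 3 => if (t : ℕ) = 0 then i else if (t : ℕ) = 1 then j else l) := by
  intro x y hxy
  rw [Fin.lt_def] at hxy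
  have hx := x.isLt; have hy := y.isLt
  rcases (by omega : ((x:ℕ) = 0 ∧ (y:ℕ) = 1) ∨ ((x:ℕ) = 0 ∧ (y:ℕ) = 2) ∨
      ((x:ℕ) = 1 ∧ (y:ℕ) = 2)) with ⟨h3, h4⟩ | ⟨h3, h4⟩ | ⟨h3, h4⟩ <;>
    simp only [h3, h4]
  · simpa using h1
  · simpa using h1.trans h2
  · simpa using h2

lemma occ132_of_three {n : ℕ} (π : Equiv.Perm (Fin n)) (i j l : Fin n)
    (h1 : i < j) (h2 : j < l) (hv1 : (π i : ℕ) < (π l : ℕ)) (hv2 : (π l : ℕ) < (π j : ℕ)) :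
    ∃ f, pat132.Occ π f := by
  refine ⟨fun t : Fin 3 => if (t : ℕ) = 0 then i else if (t : ℕ) = 1 then j else l, ?_⟩
  rw [occ132_iff]
  refine ⟨mk3_strictMono h1 h2, ?_, ?_⟩
  · show π (if ((0 : Fin 3) : ℕ) = 0 then i else if ((0 : Fin 3) : ℕ) = 1 then j else l) <
      π (if ((2 : Fin 3) : ℕ) = 0 then i else if ((2 : Fin 3) : ℕ) = 1 then j else l)
    norm_num
    rw [Fin.lt_def]
    exact hv1
  · show π (if ((2 : Fin 3) : ℕ) = 0 then i else if ((2 : Fin 3) : ℕ) = 1 then j else l) <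
      π (if ((1 : Fin 3) : ℕ) = 0 then i else if ((1 : Fin 3) : ℕ) = 1 then j else l)
    norm_num
    rw [Fin.lt_def]
    exact hv2

set_option maxHeartbeats 1000000 in
lemma perm_decomp (m : ℕ) (π : Equiv.Perm (Fin (m+1))) (hav : pat132.Avoids π) :
    ∃ (a : ℕ) (ha : a ≤ m) (α : Equiv.Perm (Fin a)) (β : Equiv.Perm (Fin (m - a))),
      π = ins ha α β := by
  obtain ⟨A, hπA⟩ : ∃ A : Fin (m+1), π A = ⟨m, by omega⟩ :=
    ⟨π.symm ⟨m, by omega⟩, Equiv.apply_symm_apply π _⟩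
  have ha : (A : ℕ) ≤ m := by have := A.isLt; omega
  obtain ⟨lpos, hlpos⟩ : ∃ lpos : Fin (A:ℕ) → Fin (m+1), ∀ x, (lpos x : ℕ) = (x:ℕ) :=
    ⟨fun x => ⟨(x:ℕ), by have := x.isLt; omega⟩, fun x => rfl⟩
  obtain ⟨rpos, hrpos⟩ : ∃ rpos : Fin (m - (A:ℕ)) → Fin (m+1),
      ∀ x, (rpos x : ℕ) = (A:ℕ)+1+(x:ℕ) :=
    ⟨fun x => ⟨(A:ℕ)+1+(x:ℕ), by have := x.isLt; omega⟩, fun x => rfl⟩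
  have hAval : ∀ i : Fin (m+1), i ≠ A → (π i : ℕ) < m := by
    intro i hi
    have hne : π i ≠ ⟨m, by omega⟩ := by
      intro h
      rw [← hπA] at h
      exact hi (π.injective h)
    have h1 := (π i).isLt
    have h2 : (π i : ℕ) ≠ m := fun h => hne (Fin.ext h)
    omega
  have hsep : ∀ i j : Fin (m+1), (i:ℕ) < (A:ℕ) → (A:ℕ) < (j:ℕ) → (π j : ℕ) < (π i : ℕ) := by
    intro i j hi hj
    by_contra hle
    push_neg at hle
    have hij : i ≠ j := by intro h; rw [h] at hi; omega
    have hlt : (π i : ℕ) < (π j : ℕ) := by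
      have h1 : π i ≠ π j := fun h => hij (π.injective h)
      have h2 : (π i : ℕ) ≠ (π j : ℕ) := fun h => h1 (Fin.ext h)
      omega
    have hiA : i < A := by rw [Fin.lt_def]; omega
    have hAj : A < j := by rw [Fin.lt_def]; omega
    have hjm : (π j : ℕ) < m := hAval j (by intro h; rw [h] at hj; omega)
    have hvA : (π A : ℕ) = m := by rw [hπA]
    exact hav (occ132_of_three π i A j hiA hAj (by omega) (by omega))
  have hleft : ∀ i : Fin (m+1), (i:ℕ) < (A:ℕ) →
      m - (A:ℕ) ≤ (π i : ℕ) ∧ (π i : ℕ) < m := by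
    intro i hi
    refine ⟨?_, hAval i (by intro h; rw [h] at hi; omega)⟩
    have hinj : Function.Injective (fun x : Fin (m - (A:ℕ)) =>
        (⟨(π (rpos x) : ℕ), hsep i (rpos x) hi (by rw [hrpos]; omega)⟩ :
          Fin ((π i : ℕ)))) := by
      intro x y h
      have h1 := congrArg Fin.val h
      have h2 : (π (rpos x) : ℕ) = (π (rpos y) : ℕ) := h1
      have h3 : rpos x = rpos y := π.injective (Fin.ext h2)
      have h4 := congrArg Fin.val h3
      rw [hrpos, hrpos] at h4
      exact Fin.ext (by omega)
    have hcard := Fintype.card_le_of_injective _ hinj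
    simpa using hcard
  have hposval : ∀ p : Fin (m+1), (p:ℕ) ≤ (A:ℕ) → m - (A:ℕ) ≤ (π p : ℕ) := by
    intro p hp
    rcases Nat.lt_or_ge (p:ℕ) (A:ℕ) with h' | h'
    · exact (hleft p h').1
    · have hpA : p = A := Fin.ext (by omega)
      rw [hpA, hπA]
      show m - (A:ℕ) ≤ m
      omega
  have hright : ∀ j : Fin (m+1), (A:ℕ) < (j:ℕ) → (π j : ℕ) < m - (A:ℕ) := by
    intro j hj
    by_contra hge
    push_neg at hge
    obtain ⟨pos, hpos1, hpos2⟩ : ∃ pos : Fin ((A:ℕ)+2) → Fin (m+1),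
        (∀ x : Fin ((A:ℕ)+2), (x:ℕ) ≤ (A:ℕ) → (pos x : ℕ) = (x:ℕ)) ∧
        (∀ x : Fin ((A:ℕ)+2), ¬ ((x:ℕ) ≤ (A:ℕ)) → pos x = j) := by
      refine ⟨fun x => if h : (x:ℕ) ≤ (A:ℕ) then ⟨(x:ℕ), by omega⟩ else j, ?_, ?_⟩
      · intro x h
        beta_reduce
        rw [dif_pos h]
      · intro x h
        beta_reduce
        rw [dif_neg h]
    have hvge : ∀ x : Fin ((A:ℕ)+2), m - (A:ℕ) ≤ (π (pos x) : ℕ) := by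
      intro x
      by_cases h : (x:ℕ) ≤ (A:ℕ)
      · exact hposval (pos x) (by rw [hpos1 x h]; exact h)
      · rw [hpos2 x h]
        exact hge
    have hinj : Function.Injective (fun x : Fin ((A:ℕ)+2) =>
        (⟨(π (pos x) : ℕ) - (m - (A:ℕ)), by have := (π (pos x)).isLt; omega⟩ :
          Fin ((A:ℕ)+1))) := by
      intro x y h
      have h1 := congrArg Fin.val h
      have h1' : (π (pos x) : ℕ) - (m - (A:ℕ)) = (π (pos y) : ℕ) - (m - (A:ℕ)) := h1
      have hx := hvge x
      have hy := hvge y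
      have h2 : (π (pos x) : ℕ) = (π (pos y) : ℕ) := by omega
      have h3 : pos x = pos y := π.injective (Fin.ext h2)
      have h4 := congrArg Fin.val h3
      by_cases hxa : (x:ℕ) ≤ (A:ℕ) <;> by_cases hya : (y:ℕ) ≤ (A:ℕ)
      · rw [hpos1 x hxa, hpos1 y hya] at h4
        exact Fin.ext h4
      · exfalso
        rw [hpos1 x hxa, hpos2 y hya] at h4
        omega
      · exfalso
        rw [hpos2 x hxa, hpos1 y hya] at h4
        omega
      · exact Fin.ext (by have := x.isLt; have := y.isLt; omega)
    have hcard := Fintype.card_le_of_injective _ hinj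
    simp at hcard
  have hαinj : Function.Injective (fun x : Fin (A:ℕ) =>
      (⟨(π (lpos x) : ℕ) - (m - (A:ℕ)), by
        have h1 := (hleft (lpos x) (by rw [hlpos]; exact x.isLt)).2
        have h2 := x.isLt
        omega⟩ : Fin (A:ℕ))) := by
    intro x y h
    have h1 := congrArg Fin.val h
    have h1' : (π (lpos x) : ℕ) - (m - (A:ℕ)) = (π (lpos y) : ℕ) - (m - (A:ℕ)) := h1
    have hx := (hleft (lpos x) (by rw [hlpos]; exact x.isLt)).1
    have hy := (hleft (lpos y) (by rw [hlpos]; exact y.isLt)).1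
    have h2 : (π (lpos x) : ℕ) = (π (lpos y) : ℕ) := by omega
    have h3 : lpos x = lpos y := π.injective (Fin.ext h2)
    have h4 := congrArg Fin.val h3
    rw [hlpos, hlpos] at h4
    exact Fin.ext h4
  have hβinj : Function.Injective (fun x : Fin (m - (A:ℕ)) =>
      (⟨(π (rpos x) : ℕ), hright (rpos x) (by rw [hrpos]; omega)⟩ : Fin (m - (A:ℕ)))) := by
    intro x y h
    have h1 := congrArg Fin.val h
    have h1' : (π (rpos x) : ℕ) = (π (rpos y) : ℕ) := h1
    have h3 : rpos x = rpos y := π.injective (Fin.ext h1')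
    have h4 := congrArg Fin.val h3
    rw [hrpos, hrpos] at h4
    exact Fin.ext (by omega)
  refine ⟨(A:ℕ), ha, Equiv.ofBijective _ (Finite.injective_iff_bijective.1 hαinj),
    Equiv.ofBijective _ (Finite.injective_iff_bijective.1 hβinj), ?_⟩
  apply Equiv.ext
  intro i
  apply Fin.ext
  rw [ins_apply]
  rcases lt_trichotomy (i:ℕ) (A:ℕ) with hi | hi | hi
  · rw [insFun_left _ _ _ hi]
    show (π i : ℕ) = m - (A:ℕ) + ((π (lpos ⟨(i:ℕ), hi⟩) : ℕ) - (m - (A:ℕ)))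
    have hei : lpos ⟨(i:ℕ), hi⟩ = i := Fin.ext (by rw [hlpos])

    rw [hei]
    have := (hleft i hi).1
    omega
  · rw [insFun_mid _ _ _ hi]
    have hiA : i = A := Fin.ext hi
    rw [hiA, hπA]
  · have hb : (i:ℕ) - (A:ℕ) - 1 < m - (A:ℕ) := by have := i.isLt; omega
    rw [insFun_right _ _ _ hi hb]
    show (π i : ℕ) = (π (rpos ⟨(i:ℕ) - (A:ℕ) - 1, hb⟩) : ℕ)
    have hei : rpos ⟨(i:ℕ) - (A:ℕ) - 1, hb⟩ = i := Fin.ext (by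
      rw [hrpos]
      show (A:ℕ) + 1 + ((i:ℕ) - (A:ℕ) - 1) = (i:ℕ)
      omega)
    rw [hei]

lemma nat_card_sigma {n : ℕ} (f : Fin n → Type*) [∀ i, Finite (f i)] :
    Nat.card (Σ i, f i) = ∑ i : Fin n, Nat.card (f i) := by
  classical
  letI : ∀ i, Fintype (f i) := fun i => Fintype.ofFinite (f i)
  rw [Nat.card_eq_fintype_card, Fintype.card_sigma]
  exact Finset.sum_congr rfl fun i _ => (Nat.card_eq_fintype_card).symm

set_option maxHeartbeats 1000000 in
lemma card_perm_decomp (m : ℕ) (P : Equiv.Perm (Fin (m+1)) → Prop)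
    (Q : ∀ a : ℕ, Equiv.Perm (Fin a) → Equiv.Perm (Fin (m - a)) → Prop)
    (hP : ∀ π, P π → pat132.Avoids π)
    (hiff : ∀ (a : ℕ) (ha : a ≤ m) (α : Equiv.Perm (Fin a)) (β : Equiv.Perm (Fin (m - a))),
      P (ins ha α β) ↔ Q a α β) :
    Nat.card {π : Equiv.Perm (Fin (m+1)) // P π} =
      ∑ a ∈ Finset.range (m+1),
        Nat.card {αβ : Equiv.Perm (Fin a) × Equiv.Perm (Fin (m - a)) // Q a αβ.1 αβ.2} := by
  classical
  have hbij : Function.Bijective (fun s : (Σ a : Fin (m+1),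
      {αβ : Equiv.Perm (Fin (a:ℕ)) × Equiv.Perm (Fin (m - (a:ℕ))) // Q (a:ℕ) αβ.1 αβ.2}) =>
      (⟨ins (show ((s.1 : Fin (m+1)) : ℕ) ≤ m by have := s.1.isLt; omega) s.2.1.1 s.2.1.2,
        (hiff _ _ _ _).2 s.2.2⟩ : {π : Equiv.Perm (Fin (m+1)) // P π})) := by
    constructor
    · rintro ⟨a1, ⟨⟨α1, β1⟩, hq1⟩⟩ ⟨a2, ⟨⟨α2, β2⟩, hq2⟩⟩ h
      have ha1 : ((a1 : Fin (m+1)) : ℕ) ≤ m := by have := a1.isLt; omega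
      have ha2 : ((a2 : Fin (m+1)) : ℕ) ≤ m := by have := a2.isLt; omega
      have heq : ins ha1 α1 β1 = ins ha2 α2 β2 := congrArg Subtype.val h
      have hval : ∀ i : Fin (m+1),
          ((ins ha1 α1 β1 i : Fin (m+1)) : ℕ) = ((ins ha2 α2 β2 i : Fin (m+1)) : ℕ) := by
        intro i
        rw [heq]
      have ha12 : (a1 : ℕ) = (a2 : ℕ) := by
        by_contra hne
        have hm1 : ((ins ha1 α1 β1 ⟨(a1:ℕ), by omega⟩ : Fin (m+1)) : ℕ) = m :=
          ins_val_mid ha1 α1 β1 rfl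
        have hv := hval ⟨(a1:ℕ), by omega⟩
        rcases Nat.lt_or_ge (a1:ℕ) (a2:ℕ) with hlt | hge
        · have := (ins_val_left ha2 α2 β2
            (show ((⟨(a1:ℕ), by omega⟩ : Fin (m+1)) : ℕ) < (a2:ℕ) from hlt)).2
          omega
        · have hgt : (a2:ℕ) < (a1:ℕ) := by omega
          have h5 := ins_val_right ha2 α2 β2
            (show (a2:ℕ) < ((⟨(a1:ℕ), by omega⟩ : Fin (m+1)) : ℕ) from hgt)
          omega
      obtain rfl : a1 = a2 := Fin.ext ha12
      obtain rfl : α1 = α2 := by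
        apply Equiv.ext
        intro x
        have h1 := hval (eL ha1 x)
        rw [ins_eL ha1 α1 β1 x, ins_eL ha2 α2 β2 x] at h1
        exact Fin.ext (by omega)
      obtain rfl : β1 = β2 := by
        apply Equiv.ext
        intro x
        have h1 := hval (eR x)
        rw [ins_eR ha1 α1 β1 x, ins_eR ha2 α1 β2 x] at h1
        exact Fin.ext h1
      rfl
    · rintro ⟨π, hπ⟩
      obtain ⟨a, haa, α, β, rfl⟩ := perm_decomp m π (hP π hπ)
      refine ⟨⟨⟨a, by omega⟩, ⟨(α, β), (hiff a haa α β).1 hπ⟩⟩, ?_⟩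
      apply Subtype.ext
      rfl
  rw [← Nat.card_eq_of_bijective _ hbij, nat_card_sigma]
  exact Fin.sum_univ_eq_sum_range (fun i => Nat.card
    {αβ : Equiv.Perm (Fin i) × Equiv.Perm (Fin (m - i)) // Q i αβ.1 αβ.2}) (m+1)

end Decomp

section Coeffs

noncomputable def fA (k n : ℕ) : ℕ :=
  Nat.card {π : Equiv.Perm (Fin n) // pat132.Avoids π ∧ (sg k).Avoids π}

noncomputable def fG (k n : ℕ) : ℕ :=
  Nat.card {π : Equiv.Perm (Fin n) // pat132.Avoids π ∧ (sg k).ContainsOnce π}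

noncomputable def fW (kk n : ℕ) : ℕ :=
  Nat.card {π : Equiv.Perm (Fin n) //
    pat132.Avoids π ∧ (sg (kk+3)).Avoids π ∧ (sg (kk+2)).ContainsOnce π}

lemma perm0_unique (P : Equiv.Perm (Fin 0) → Prop) (hP : P 1) :
    Nat.card {π : Equiv.Perm (Fin 0) // P π} = 1 := by
  rw [card_one_iff_existsUnique]
  refine ⟨1, hP, ?_⟩
  intro π _
  exact Equiv.ext fun x => x.elim0

lemma avoids132_zero (π : Equiv.Perm (Fin 0)) : pat132.Avoids π :=
  (avoids_iff_nocc _ _).2 (nocc132_empty π)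

lemma avoids_sg_zero {k : ℕ} (hk : 1 ≤ k) (π : Equiv.Perm (Fin 0)) : (sg k).Avoids π :=
  (avoids_iff_nocc _ _).2 (nocc_empty hk π)

lemma fA_zero {k : ℕ} (hk : 1 ≤ k) : fA k 0 = 1 :=
  perm0_unique _ ⟨avoids132_zero 1, avoids_sg_zero hk 1⟩

lemma fG_zero {k : ℕ} (hk : 1 ≤ k) : fG k 0 = 0 := by
  rw [fG, card_zero_iff_not_exists]
  rintro ⟨π, -, h⟩
  rw [containsOnce_iff_nocc] at h
  have := nocc_empty hk π
  omega

lemma fW_zero (kk : ℕ) : fW kk 0 = 0 := by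
  rw [fW, card_zero_iff_not_exists]
  rintro ⟨π, -, -, h⟩
  rw [containsOnce_iff_nocc] at h
  have := nocc_empty (by omega : 1 ≤ kk+2) π
  omega

lemma fA1 (n : ℕ) : fA 1 n = if n = 0 then 1 else 0 := by
  rcases n with - | m
  · rw [if_pos rfl]
    exact fA_zero le_rfl
  · rw [if_neg (by omega), fA, card_zero_iff_not_exists]
    rintro ⟨π, -, h⟩
    rw [avoids1_iff] at h
    omega

lemma card_pair_split {A B : Type*} [Finite A] [Finite B] (p : A → Prop) (q : B → Prop) :
    Nat.card {x : A × B // p x.1 ∧ q x.2} = Nat.card {a // p a} * Nat.card {b // q b} := by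
  rw [Nat.card_congr (Equiv.subtypeProdEquivProd), Nat.card_prod]

lemma fA_rec3 (kk m : ℕ) :
    fA (kk+3) (m+1) = ∑ a ∈ Finset.range (m+1), fA (kk+2) a * fA (kk+3) (m - a) := by
  have h := card_perm_decomp m
    (fun π => pat132.Avoids π ∧ (sg (kk+3)).Avoids π)
    (fun a α β => (pat132.Avoids α ∧ (sg (kk+2)).Avoids α) ∧
      (pat132.Avoids β ∧ (sg (kk+3)).Avoids β))
    (fun π hπ => hπ.1)
    (by
      intro a ha α β
      constructor
      · rintro ⟨h132, hsg⟩
        obtain ⟨hα132, hβ132⟩ := (ins_avoids132 ha α β).1 h132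
        rw [avoids_iff_nocc, nocc_ins_big ha α β kk] at hsg
        exact ⟨⟨hα132, (avoids_iff_nocc _ _).2 (by omega)⟩,
               hβ132, (avoids_iff_nocc _ _).2 (by omega)⟩
      · rintro ⟨⟨hα132, hα⟩, hβ132, hβ⟩
        refine ⟨(ins_avoids132 ha α β).2 ⟨hα132, hβ132⟩, ?_⟩
        rw [avoids_iff_nocc, nocc_ins_big ha α β kk]
        rw [avoids_iff_nocc] at hα hβ
        have hα3 : Nocc (sg (kk+3)) α = 0 := nocc_succ_zero hα
        omega)
  have h2 : fA (kk+3) (m+1) = ∑ a ∈ Finset.range (m+1),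
      Nat.card {αβ : Equiv.Perm (Fin a) × Equiv.Perm (Fin (m - a)) //
        (pat132.Avoids αβ.1 ∧ (sg (kk+2)).Avoids αβ.1) ∧
        (pat132.Avoids αβ.2 ∧ (sg (kk+3)).Avoids αβ.2)} := h
  rw [h2]
  refine Finset.sum_congr rfl fun a _ => ?_
  exact card_pair_split (fun α => pat132.Avoids α ∧ (sg (kk+2)).Avoids α)
    (fun β => pat132.Avoids β ∧ (sg (kk+3)).Avoids β)

lemma fA_rec2 (m : ℕ) :
    fA 2 (m+1) = ∑ a ∈ Finset.range (m+1), fA 1 a * fA 2 (m - a) := by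
  have h := card_perm_decomp m
    (fun π => pat132.Avoids π ∧ (sg 2).Avoids π)
    (fun a α β => (pat132.Avoids α ∧ (sg 1).Avoids α) ∧
      (pat132.Avoids β ∧ (sg 2).Avoids β))
    (fun π hπ => hπ.1)
    (by
      intro a ha α β
      constructor
      · rintro ⟨h132, hsg⟩
        obtain ⟨hα132, hβ132⟩ := (ins_avoids132 ha α β).1 h132
        rw [avoids_iff_nocc, nocc_ins_two ha α β] at hsg
        have ha0 : a = 0 := by
          by_cases h0 : 0 < a
          · rw [if_pos h0] at hsg; omega
          · omega
        exact ⟨⟨hα132, (avoids1_iff α).2 ha0⟩,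
               hβ132, (avoids_iff_nocc _ _).2 (by
                 rw [if_neg (by omega)] at hsg
                 omega)⟩
      · rintro ⟨⟨hα132, hα⟩, hβ132, hβ⟩
        obtain rfl : a = 0 := (avoids1_iff α).1 hα
        refine ⟨(ins_avoids132 ha α β).2 ⟨hα132, hβ132⟩, ?_⟩
        rw [avoids_iff_nocc, nocc_ins_two ha α β, if_neg (by omega)]
        rw [avoids_iff_nocc] at hβ
        have h0 : Nocc (sg 2) α = 0 := nocc_empty (by omega) α
        omega)
  have h2 : fA 2 (m+1) = ∑ a ∈ Finset.range (m+1),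
      Nat.card {αβ : Equiv.Perm (Fin a) × Equiv.Perm (Fin (m - a)) //
        (pat132.Avoids αβ.1 ∧ (sg 1).Avoids αβ.1) ∧
        (pat132.Avoids αβ.2 ∧ (sg 2).Avoids αβ.2)} := h
  rw [h2]
  refine Finset.sum_congr rfl fun a _ => ?_
  exact card_pair_split (fun α => pat132.Avoids α ∧ (sg 1).Avoids α)
    (fun β => pat132.Avoids β ∧ (sg 2).Avoids β)

end Coeffs

section Coeffs2

lemma card_pair_split_or {A B : Type*} [Finite A] [Finite B]
    (p1 q1 : A → Prop) (q1' q2' : B → Prop) (hd : ∀ x : A, ¬(p1 x ∧ q1 x)) :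
    Nat.card {x : A × B // (p1 x.1 ∧ q1' x.2) ∨ (q1 x.1 ∧ q2' x.2)} =
      Nat.card {a // p1 a} * Nat.card {b // q1' b} +
      Nat.card {a // q1 a} * Nat.card {b // q2' b} := by
  have h1 : Nat.card {x : A × B // (p1 x.1 ∧ q1' x.2) ∨ (q1 x.1 ∧ q2' x.2)} =
      Nat.card {x : A × B // p1 x.1 ∧ q1' x.2} + Nat.card {x : A × B // q1 x.1 ∧ q2' x.2} :=
    card_or_disjoint (fun x h => hd x.1 ⟨h.1.1, h.2.1⟩)
  rw [h1, card_pair_split p1 q1', card_pair_split q1 q2']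

lemma fW_rec (kk m : ℕ) :
    fW (kk+1) (m+1) = ∑ a ∈ Finset.range (m+1),
      (fW kk a * fA (kk+3) (m - a) + fA (kk+2) a * fW (kk+1) (m - a)) := by
  have h := card_perm_decomp m
    (fun π => pat132.Avoids π ∧ (sg (kk+4)).Avoids π ∧ (sg (kk+3)).ContainsOnce π)
    (fun a α β =>
      ((pat132.Avoids α ∧ (sg (kk+3)).Avoids α ∧ (sg (kk+2)).ContainsOnce α) ∧
        (pat132.Avoids β ∧ (sg (kk+3)).Avoids β)) ∨
      ((pat132.Avoids α ∧ (sg (kk+2)).Avoids α) ∧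
        (pat132.Avoids β ∧ (sg (kk+4)).Avoids β ∧ (sg (kk+3)).ContainsOnce β)))
    (fun π hπ => hπ.1)
    (by
      intro a ha α β
      have hbig4 : Nocc (sg (kk+4)) (ins ha α β) =
          Nocc (sg (kk+4)) α + Nocc (sg (kk+3)) α + Nocc (sg (kk+4)) β :=
        nocc_ins_big ha α β (kk+1)
      have hbig3 : Nocc (sg (kk+3)) (ins ha α β) =
          Nocc (sg (kk+3)) α + Nocc (sg (kk+2)) α + Nocc (sg (kk+3)) β :=
        nocc_ins_big ha α β kk
      constructor
      · rintro ⟨h132, hav4, honce3⟩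
        obtain ⟨hα132, hβ132⟩ := (ins_avoids132 ha α β).1 h132
        rw [avoids_iff_nocc, hbig4] at hav4
        rw [containsOnce_iff_nocc, hbig3] at honce3
        by_cases h2a : Nocc (sg (kk+2)) α = 0
        · refine Or.inr ⟨⟨hα132, (avoids_iff_nocc _ _).2 h2a⟩,
            hβ132, (avoids_iff_nocc _ _).2 (by omega),
            (containsOnce_iff_nocc _ _).2 (by omega)⟩
        · refine Or.inl ⟨⟨hα132, (avoids_iff_nocc _ _).2 (by omega),
            (containsOnce_iff_nocc _ _).2 (by omega)⟩,
            hβ132, (avoids_iff_nocc _ _).2 (by omega)⟩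
      · rintro (⟨⟨hα132, hα3, hα2⟩, hβ132, hβ3⟩ | ⟨⟨hα132, hα2⟩, hβ132, hβ4, hβ3⟩)
        · rw [avoids_iff_nocc] at hα3 hβ3
          rw [containsOnce_iff_nocc] at hα2
          have hα4 : Nocc (sg (kk+4)) α = 0 := nocc_succ_zero hα3
          have hβ4 : Nocc (sg (kk+4)) β = 0 := nocc_succ_zero hβ3
          exact ⟨(ins_avoids132 ha α β).2 ⟨hα132, hβ132⟩,
            (avoids_iff_nocc _ _).2 (by rw [hbig4]; omega),
            (containsOnce_iff_nocc _ _).2 (by rw [hbig3]; omega)⟩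
        · rw [avoids_iff_nocc] at hα2 hβ4
          rw [containsOnce_iff_nocc] at hβ3
          have hα3 : Nocc (sg (kk+3)) α = 0 := nocc_succ_zero hα2
          have hα4 : Nocc (sg (kk+4)) α = 0 := nocc_succ_zero hα3
          exact ⟨(ins_avoids132 ha α β).2 ⟨hα132, hβ132⟩,
            (avoids_iff_nocc _ _).2 (by rw [hbig4]; omega),
            (containsOnce_iff_nocc _ _).2 (by rw [hbig3]; omega)⟩)
  have h2 : fW (kk+1) (m+1) = ∑ a ∈ Finset.range (m+1),
      Nat.card {αβ : Equiv.Perm (Fin a) × Equiv.Perm (Fin (m - a)) //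
        ((pat132.Avoids αβ.1 ∧ (sg (kk+3)).Avoids αβ.1 ∧ (sg (kk+2)).ContainsOnce αβ.1) ∧
          (pat132.Avoids αβ.2 ∧ (sg (kk+3)).Avoids αβ.2)) ∨
        ((pat132.Avoids αβ.1 ∧ (sg (kk+2)).Avoids αβ.1) ∧
          (pat132.Avoids αβ.2 ∧ (sg (kk+4)).Avoids αβ.2 ∧ (sg (kk+3)).ContainsOnce αβ.2))} := h
  rw [h2]
  refine Finset.sum_congr rfl fun a _ => ?_
  exact card_pair_split_or
    (fun α => pat132.Avoids α ∧ (sg (kk+3)).Avoids α ∧ (sg (kk+2)).ContainsOnce α)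
    (fun α => pat132.Avoids α ∧ (sg (kk+2)).Avoids α)
    (fun β => pat132.Avoids β ∧ (sg (kk+3)).Avoids β)
    (fun β => pat132.Avoids β ∧ (sg (kk+4)).Avoids β ∧ (sg (kk+3)).ContainsOnce β)
    (fun α h => by
      have h1 := h.1.2.2
      have h2 := h.2.2
      rw [containsOnce_iff_nocc] at h1
      rw [avoids_iff_nocc] at h2
      omega)

lemma fG_rec3 (kk m : ℕ) :
    fG (kk+3) (m+1) = ∑ a ∈ Finset.range (m+1),
      (fW kk a * fA (kk+3) (m - a) + fA (kk+2) a * fG (kk+3) (m - a)) := by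
  have h := card_perm_decomp m
    (fun π => pat132.Avoids π ∧ (sg (kk+3)).ContainsOnce π)
    (fun a α β =>
      ((pat132.Avoids α ∧ (sg (kk+3)).Avoids α ∧ (sg (kk+2)).ContainsOnce α) ∧
        (pat132.Avoids β ∧ (sg (kk+3)).Avoids β)) ∨
      ((pat132.Avoids α ∧ (sg (kk+2)).Avoids α) ∧
        (pat132.Avoids β ∧ (sg (kk+3)).ContainsOnce β)))
    (fun π hπ => hπ.1)
    (by
      intro a ha α β
      have hbig3 : Nocc (sg (kk+3)) (ins ha α β) =
          Nocc (sg (kk+3)) α + Nocc (sg (kk+2)) α + Nocc (sg (kk+3)) β :=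
        nocc_ins_big ha α β kk
      constructor
      · rintro ⟨h132, honce3⟩
        obtain ⟨hα132, hβ132⟩ := (ins_avoids132 ha α β).1 h132
        rw [containsOnce_iff_nocc, hbig3] at honce3
        by_cases h2a : Nocc (sg (kk+2)) α = 0
        · have hα3 : Nocc (sg (kk+3)) α = 0 := nocc_succ_zero h2a
          exact Or.inr ⟨⟨hα132, (avoids_iff_nocc _ _).2 h2a⟩,
            hβ132, (containsOnce_iff_nocc _ _).2 (by omega)⟩
        · exact Or.inl ⟨⟨hα132, (avoids_iff_nocc _ _).2 (by omega),
            (containsOnce_iff_nocc _ _).2 (by omega)⟩,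
            hβ132, (avoids_iff_nocc _ _).2 (by omega)⟩
      · rintro (⟨⟨hα132, hα3, hα2⟩, hβ132, hβ3⟩ | ⟨⟨hα132, hα2⟩, hβ132, hβ3⟩)
        · rw [avoids_iff_nocc] at hα3 hβ3
          rw [containsOnce_iff_nocc] at hα2
          exact ⟨(ins_avoids132 ha α β).2 ⟨hα132, hβ132⟩,
            (containsOnce_iff_nocc _ _).2 (by rw [hbig3]; omega)⟩
        · rw [avoids_iff_nocc] at hα2
          rw [containsOnce_iff_nocc] at hβ3
          have hα3 : Nocc (sg (kk+3)) α = 0 := nocc_succ_zero hα2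
          exact ⟨(ins_avoids132 ha α β).2 ⟨hα132, hβ132⟩,
            (containsOnce_iff_nocc _ _).2 (by rw [hbig3]; omega)⟩)
  have h2 : fG (kk+3) (m+1) = ∑ a ∈ Finset.range (m+1),
      Nat.card {αβ : Equiv.Perm (Fin a) × Equiv.Perm (Fin (m - a)) //
        ((pat132.Avoids αβ.1 ∧ (sg (kk+3)).Avoids αβ.1 ∧ (sg (kk+2)).ContainsOnce αβ.1) ∧
          (pat132.Avoids αβ.2 ∧ (sg (kk+3)).Avoids αβ.2)) ∨
        ((pat132.Avoids αβ.1 ∧ (sg (kk+2)).Avoids αβ.1) ∧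
          (pat132.Avoids αβ.2 ∧ (sg (kk+3)).ContainsOnce αβ.2))} := h
  rw [h2]
  refine Finset.sum_congr rfl fun a _ => ?_
  exact card_pair_split_or
    (fun α => pat132.Avoids α ∧ (sg (kk+3)).Avoids α ∧ (sg (kk+2)).ContainsOnce α)
    (fun α => pat132.Avoids α ∧ (sg (kk+2)).Avoids α)
    (fun β => pat132.Avoids β ∧ (sg (kk+3)).Avoids β)
    (fun β => pat132.Avoids β ∧ (sg (kk+3)).ContainsOnce β)
    (fun α h => by
      have h1 := h.1.2.2
      have h2 := h.2.2
      rw [containsOnce_iff_nocc] at h1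
      rw [avoids_iff_nocc] at h2
      omega)

end Coeffs2

section Coeffs3

lemma card_alpha_pos (a : ℕ) (R : Equiv.Perm (Fin a) → Prop) :
    Nat.card {α : Equiv.Perm (Fin a) // R α ∧ ¬ a = 0} =
      if a = 0 then 0 else Nat.card {α : Equiv.Perm (Fin a) // R α} := by
  by_cases h0 : a = 0
  · rw [if_pos h0, card_zero_iff_not_exists]
    rintro ⟨α, -, h⟩
    exact h h0
  · rw [if_neg h0]
    exact Nat.card_congr (Equiv.subtypeEquivRight (fun α => by tauto))

lemma card_alpha_zero (a : ℕ) :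
    Nat.card {α : Equiv.Perm (Fin a) // pat132.Avoids α ∧ a = 0} =
      if a = 0 then 1 else 0 := by
  by_cases h0 : a = 0
  · subst h0
    rw [if_pos rfl]
    exact perm0_unique _ ⟨avoids132_zero 1, rfl⟩
  · rw [if_neg h0, card_zero_iff_not_exists]
    rintro ⟨α, -, h⟩
    exact h0 h

lemma fG_rec2 (m : ℕ) :
    fG 2 (m+1) = ∑ a ∈ Finset.range (m+1),
      ((if a = 0 then 0 else fA 2 a) * fA 2 (m - a) +
        (if a = 0 then 1 else 0) * fG 2 (m - a)) := by
  have h := card_perm_decomp m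
    (fun π => pat132.Avoids π ∧ (sg 2).ContainsOnce π)
    (fun a α β =>
      (((pat132.Avoids α ∧ (sg 2).Avoids α) ∧ ¬ a = 0) ∧
        (pat132.Avoids β ∧ (sg 2).Avoids β)) ∨
      ((pat132.Avoids α ∧ a = 0) ∧ (pat132.Avoids β ∧ (sg 2).ContainsOnce β)))
    (fun π hπ => hπ.1)
    (by
      intro a ha α β
      constructor
      · rintro ⟨h132, honce⟩
        obtain ⟨hα132, hβ132⟩ := (ins_avoids132 ha α β).1 h132
        rw [containsOnce_iff_nocc, nocc_ins_two ha α β] at honce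
        by_cases h0 : a = 0
        · subst h0
          rw [if_neg (by omega)] at honce
          have hα2 : Nocc (sg 2) α = 0 := nocc_empty (by omega) α
          exact Or.inr ⟨⟨hα132, rfl⟩, hβ132, (containsOnce_iff_nocc _ _).2 (by omega)⟩
        · rw [if_pos (by omega)] at honce
          exact Or.inl ⟨⟨⟨hα132, (avoids_iff_nocc _ _).2 (by omega)⟩, h0⟩,
            hβ132, (avoids_iff_nocc _ _).2 (by omega)⟩
      · rintro (⟨⟨⟨hα132, hα2⟩, h0⟩, hβ132, hβ2⟩ | ⟨⟨hα132, h0⟩, hβ132, hβ2⟩)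
        · rw [avoids_iff_nocc] at hα2 hβ2
          exact ⟨(ins_avoids132 ha α β).2 ⟨hα132, hβ132⟩,
            (containsOnce_iff_nocc _ _).2 (by
              rw [nocc_ins_two ha α β, if_pos (by omega)]; omega)⟩
        · subst h0
          rw [containsOnce_iff_nocc] at hβ2
          have hα2 : Nocc (sg 2) α = 0 := nocc_empty (by omega) α
          exact ⟨(ins_avoids132 ha α β).2 ⟨hα132, hβ132⟩,
            (containsOnce_iff_nocc _ _).2 (by
              rw [nocc_ins_two ha α β, if_neg (by omega)]; omega)⟩)
  have h2 : fG 2 (m+1) = ∑ a ∈ Finset.range (m+1),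
      Nat.card {αβ : Equiv.Perm (Fin a) × Equiv.Perm (Fin (m - a)) //
        (((pat132.Avoids αβ.1 ∧ (sg 2).Avoids αβ.1) ∧ ¬ a = 0) ∧
          (pat132.Avoids αβ.2 ∧ (sg 2).Avoids αβ.2)) ∨
        ((pat132.Avoids αβ.1 ∧ a = 0) ∧ (pat132.Avoids αβ.2 ∧ (sg 2).ContainsOnce αβ.2))} := h
  rw [h2]
  refine Finset.sum_congr rfl fun a _ => ?_
  have hsp : Nat.card {αβ : Equiv.Perm (Fin a) × Equiv.Perm (Fin (m - a)) //
        (((pat132.Avoids αβ.1 ∧ (sg 2).Avoids αβ.1) ∧ ¬ a = 0) ∧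
          (pat132.Avoids αβ.2 ∧ (sg 2).Avoids αβ.2)) ∨
        ((pat132.Avoids αβ.1 ∧ a = 0) ∧ (pat132.Avoids αβ.2 ∧ (sg 2).ContainsOnce αβ.2))} =
      Nat.card {α : Equiv.Perm (Fin a) // (pat132.Avoids α ∧ (sg 2).Avoids α) ∧ ¬ a = 0} *
        Nat.card {β : Equiv.Perm (Fin (m - a)) // pat132.Avoids β ∧ (sg 2).Avoids β} +
      Nat.card {α : Equiv.Perm (Fin a) // pat132.Avoids α ∧ a = 0} *
        Nat.card {β : Equiv.Perm (Fin (m - a)) // pat132.Avoids β ∧ (sg 2).ContainsOnce β} :=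
    card_pair_split_or
      (fun α => (pat132.Avoids α ∧ (sg 2).Avoids α) ∧ ¬ a = 0)
      (fun α => pat132.Avoids α ∧ a = 0)
      (fun β => pat132.Avoids β ∧ (sg 2).Avoids β)
      (fun β => pat132.Avoids β ∧ (sg 2).ContainsOnce β)
      (fun α h => h.1.2 h.2.2)
  have e1 : Nat.card {α : Equiv.Perm (Fin a) // (pat132.Avoids α ∧ (sg 2).Avoids α) ∧ ¬ a = 0} =
      if a = 0 then 0 else fA 2 a :=
    card_alpha_pos a (fun α => pat132.Avoids α ∧ (sg 2).Avoids α)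
  have e2 : Nat.card {α : Equiv.Perm (Fin a) // pat132.Avoids α ∧ a = 0} =
      if a = 0 then 1 else 0 := card_alpha_zero a
  have e3 : Nat.card {β : Equiv.Perm (Fin (m - a)) // pat132.Avoids β ∧ (sg 2).Avoids β} =
      fA 2 (m - a) := rfl
  have e4 : Nat.card {β : Equiv.Perm (Fin (m - a)) //
      pat132.Avoids β ∧ (sg 2).ContainsOnce β} = fG 2 (m - a) := rfl
  rw [hsp, e1, e2, e3, e4]

lemma fW0_rec (m : ℕ) :
    fW 0 (m+1) = ∑ a ∈ Finset.range (m+1),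
      ((if a = 0 then 0 else fA 2 a) * fA 2 (m - a) +
        (if a = 0 then 1 else 0) * fW 0 (m - a)) := by
  have h := card_perm_decomp m
    (fun π => pat132.Avoids π ∧ (sg 3).Avoids π ∧ (sg 2).ContainsOnce π)
    (fun a α β =>
      (((pat132.Avoids α ∧ (sg 2).Avoids α) ∧ ¬ a = 0) ∧
        (pat132.Avoids β ∧ (sg 2).Avoids β)) ∨
      ((pat132.Avoids α ∧ a = 0) ∧
        (pat132.Avoids β ∧ (sg 3).Avoids β ∧ (sg 2).ContainsOnce β)))
    (fun π hπ => hπ.1)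
    (by
      intro a ha α β
      have hbig3 : Nocc (sg 3) (ins ha α β) =
          Nocc (sg 3) α + Nocc (sg 2) α + Nocc (sg 3) β :=
        nocc_ins_big ha α β 0
      constructor
      · rintro ⟨h132, hav3, honce⟩
        obtain ⟨hα132, hβ132⟩ := (ins_avoids132 ha α β).1 h132
        rw [avoids_iff_nocc, hbig3] at hav3
        rw [containsOnce_iff_nocc, nocc_ins_two ha α β] at honce
        by_cases h0 : a = 0
        · subst h0
          rw [if_neg (by omega)] at honce
          have hα2 : Nocc (sg 2) α = 0 := nocc_empty (by omega) α
          exact Or.inr ⟨⟨hα132, rfl⟩, hβ132, (avoids_iff_nocc _ _).2 (by omega),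
            (containsOnce_iff_nocc _ _).2 (by omega)⟩
        · rw [if_pos (by omega)] at honce
          exact Or.inl ⟨⟨⟨hα132, (avoids_iff_nocc _ _).2 (by omega)⟩, h0⟩,
            hβ132, (avoids_iff_nocc _ _).2 (by omega)⟩
      · rintro (⟨⟨⟨hα132, hα2⟩, h0⟩, hβ132, hβ2⟩ | ⟨⟨hα132, h0⟩, hβ132, hβ3, hβ2⟩)
        · rw [avoids_iff_nocc] at hα2 hβ2
          have hα3 : Nocc (sg 3) α = 0 := nocc_succ_zero hα2
          have hβ3 : Nocc (sg 3) β = 0 := nocc_succ_zero hβ2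
          exact ⟨(ins_avoids132 ha α β).2 ⟨hα132, hβ132⟩,
            (avoids_iff_nocc _ _).2 (by rw [hbig3]; omega),
            (containsOnce_iff_nocc _ _).2 (by
              rw [nocc_ins_two ha α β, if_pos (by omega)]; omega)⟩
        · subst h0
          rw [avoids_iff_nocc] at hβ3
          rw [containsOnce_iff_nocc] at hβ2
          have hα2 : Nocc (sg 2) α = 0 := nocc_empty (by omega) α
          have hα3 : Nocc (sg 3) α = 0 := nocc_empty (by omega) α
          exact ⟨(ins_avoids132 ha α β).2 ⟨hα132, hβ132⟩,
            (avoids_iff_nocc _ _).2 (by rw [hbig3]; omega),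
            (containsOnce_iff_nocc _ _).2 (by
              rw [nocc_ins_two ha α β, if_neg (by omega)]; omega)⟩)
  have h2 : fW 0 (m+1) = ∑ a ∈ Finset.range (m+1),
      Nat.card {αβ : Equiv.Perm (Fin a) × Equiv.Perm (Fin (m - a)) //
        (((pat132.Avoids αβ.1 ∧ (sg 2).Avoids αβ.1) ∧ ¬ a = 0) ∧
          (pat132.Avoids αβ.2 ∧ (sg 2).Avoids αβ.2)) ∨
        ((pat132.Avoids αβ.1 ∧ a = 0) ∧
          (pat132.Avoids αβ.2 ∧ (sg 3).Avoids αβ.2 ∧ (sg 2).ContainsOnce αβ.2))} := h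
  rw [h2]
  refine Finset.sum_congr rfl fun a _ => ?_
  have hsp : Nat.card {αβ : Equiv.Perm (Fin a) × Equiv.Perm (Fin (m - a)) //
        (((pat132.Avoids αβ.1 ∧ (sg 2).Avoids αβ.1) ∧ ¬ a = 0) ∧
          (pat132.Avoids αβ.2 ∧ (sg 2).Avoids αβ.2)) ∨
        ((pat132.Avoids αβ.1 ∧ a = 0) ∧
          (pat132.Avoids αβ.2 ∧ (sg 3).Avoids αβ.2 ∧ (sg 2).ContainsOnce αβ.2))} =
      Nat.card {α : Equiv.Perm (Fin a) // (pat132.Avoids α ∧ (sg 2).Avoids α) ∧ ¬ a = 0} *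
        Nat.card {β : Equiv.Perm (Fin (m - a)) // pat132.Avoids β ∧ (sg 2).Avoids β} +
      Nat.card {α : Equiv.Perm (Fin a) // pat132.Avoids α ∧ a = 0} *
        Nat.card {β : Equiv.Perm (Fin (m - a)) //
          pat132.Avoids β ∧ (sg 3).Avoids β ∧ (sg 2).ContainsOnce β} :=
    card_pair_split_or
      (fun α => (pat132.Avoids α ∧ (sg 2).Avoids α) ∧ ¬ a = 0)
      (fun α => pat132.Avoids α ∧ a = 0)
      (fun β => pat132.Avoids β ∧ (sg 2).Avoids β)
      (fun β => pat132.Avoids β ∧ (sg 3).Avoids β ∧ (sg 2).ContainsOnce β)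
      (fun α h => h.1.2 h.2.2)
  have e1 : Nat.card {α : Equiv.Perm (Fin a) // (pat132.Avoids α ∧ (sg 2).Avoids α) ∧ ¬ a = 0} =
      if a = 0 then 0 else fA 2 a :=
    card_alpha_pos a (fun α => pat132.Avoids α ∧ (sg 2).Avoids α)
  have e2 : Nat.card {α : Equiv.Perm (Fin a) // pat132.Avoids α ∧ a = 0} =
      if a = 0 then 1 else 0 := card_alpha_zero a
  have e3 : Nat.card {β : Equiv.Perm (Fin (m - a)) // pat132.Avoids β ∧ (sg 2).Avoids β} =
      fA 2 (m - a) := rfl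
  have e4 : Nat.card {β : Equiv.Perm (Fin (m - a)) //
      pat132.Avoids β ∧ (sg 3).Avoids β ∧ (sg 2).ContainsOnce β} = fW 0 (m - a) := rfl
  rw [hsp, e1, e2, e3, e4]

end Coeffs3


section Series

noncomputable def mkQ (u : ℕ → ℕ) : PowerSeries ℚ := PowerSeries.mk fun n => (u n : ℚ)

lemma mk_rec_one (u v w : ℕ → ℕ) (hu0 : u 0 = 1)
    (hrec : ∀ m, u (m+1) = ∑ a ∈ Finset.range (m+1), v a * w (m - a)) :
    mkQ u = 1 + PowerSeries.X * (mkQ v * mkQ w) := by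
  ext n
  rcases n with - | m
  · rw [mkQ, PowerSeries.coeff_mk, map_add, PowerSeries.coeff_one,
      PowerSeries.coeff_zero_X_mul, hu0]
    norm_num
  · rw [mkQ, PowerSeries.coeff_mk, map_add, PowerSeries.coeff_one,
      PowerSeries.coeff_succ_X_mul, PowerSeries.coeff_mul,
      Finset.Nat.sum_antidiagonal_eq_sum_range_succ_mk, hrec m, if_neg (by omega)]
    push_cast
    rw [zero_add]
    refine Finset.sum_congr rfl fun a _ => ?_
    rw [mkQ, mkQ, PowerSeries.coeff_mk, PowerSeries.coeff_mk]

lemma mk_rec_X (u v w p q : ℕ → ℕ) (hu0 : u 0 = 0)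
    (hrec : ∀ m, u (m+1) = ∑ a ∈ Finset.range (m+1), (v a * w (m - a) + p a * q (m - a))) :
    mkQ u = PowerSeries.X * (mkQ v * mkQ w + mkQ p * mkQ q) := by
  ext n
  rcases n with - | m
  · rw [mkQ, PowerSeries.coeff_mk, PowerSeries.coeff_zero_X_mul, hu0]
    norm_num
  · rw [mkQ, PowerSeries.coeff_mk, PowerSeries.coeff_succ_X_mul, map_add,
      PowerSeries.coeff_mul, PowerSeries.coeff_mul,
      Finset.Nat.sum_antidiagonal_eq_sum_range_succ_mk,
      Finset.Nat.sum_antidiagonal_eq_sum_range_succ_mk,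
      ← Finset.sum_add_distrib, hrec m]
    push_cast
    refine Finset.sum_congr rfl fun a _ => ?_
    rw [mkQ, mkQ, mkQ, mkQ, PowerSeries.coeff_mk, PowerSeries.coeff_mk,
      PowerSeries.coeff_mk, PowerSeries.coeff_mk]

lemma hVeq (k : ℕ) : V (k+2) = V (k+1) - PowerSeries.X * V k := rfl

lemma hF1 : mkQ (fA 1) = 1 := by
  ext n
  rw [mkQ, PowerSeries.coeff_mk, PowerSeries.coeff_one, fA1]
  split_ifs <;> norm_num

lemma hFrec (k : ℕ) :
    mkQ (fA (k+2)) = 1 + PowerSeries.X * (mkQ (fA (k+1)) * mkQ (fA (k+2))) := by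
  rcases k with - | kk
  · exact mk_rec_one (fA 2) (fA 1) (fA 2) (fA_zero (by omega)) fA_rec2
  · exact mk_rec_one (fA (kk+3)) (fA (kk+2)) (fA (kk+3)) (fA_zero (by omega)) (fA_rec3 kk)

lemma hvsub : mkQ (fun a => if a = 0 then 0 else fA 2 a) = mkQ (fA 2) - 1 := by
  ext n
  rw [mkQ, mkQ, PowerSeries.coeff_mk, map_sub, PowerSeries.coeff_mk, PowerSeries.coeff_one]
  rcases n with - | m
  · rw [if_pos rfl, if_pos rfl, fA_zero (by omega : 1 ≤ 2)]
    norm_num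
  · rw [if_neg (by omega), if_neg (by omega)]
    norm_num

lemma hpone : mkQ (fun a => if a = 0 then 1 else 0) = 1 := by
  ext n
  rw [mkQ, PowerSeries.coeff_mk, PowerSeries.coeff_one]
  split_ifs <;> norm_num

lemma hG2rec : mkQ (fG 2) = PowerSeries.X * ((mkQ (fA 2) - 1) * mkQ (fA 2) + 1 * mkQ (fG 2)) := by
  have h := mk_rec_X (fG 2) (fun a => if a = 0 then 0 else fA 2 a) (fA 2)
    (fun a => if a = 0 then 1 else 0) (fG 2) (fG_zero (by omega)) fG_rec2
  rw [hvsub, hpone] at h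
  exact h

lemma hW0rec : mkQ (fW 0) = PowerSeries.X * ((mkQ (fA 2) - 1) * mkQ (fA 2) + 1 * mkQ (fW 0)) := by
  have h := mk_rec_X (fW 0) (fun a => if a = 0 then 0 else fA 2 a) (fA 2)
    (fun a => if a = 0 then 1 else 0) (fW 0) (fW_zero 0) fW0_rec
  rw [hvsub, hpone] at h
  exact h

lemma hWrec (kk : ℕ) : mkQ (fW (kk+1)) = PowerSeries.X *
    (mkQ (fW kk) * mkQ (fA (kk+3)) + mkQ (fA (kk+2)) * mkQ (fW (kk+1))) :=
  mk_rec_X (fW (kk+1)) (fW kk) (fA (kk+3)) (fA (kk+2)) (fW (kk+1)) (fW_zero (kk+1)) (fW_rec kk)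

lemma hGrec (kk : ℕ) : mkQ (fG (kk+3)) = PowerSeries.X *
    (mkQ (fW kk) * mkQ (fA (kk+3)) + mkQ (fA (kk+2)) * mkQ (fG (kk+3))) :=
  mk_rec_X (fG (kk+3)) (fW kk) (fA (kk+3)) (fA (kk+2)) (fG (kk+3))
    (fG_zero (by omega)) (fG_rec3 kk)

lemma hFV : ∀ k, V (k+1) * mkQ (fA (k+1)) = V k := by
  intro k
  induction k with
  | zero =>
    show (1 : PowerSeries ℚ) * mkQ (fA 1) = 1
    rw [hF1, one_mul]
  | succ k ih =>
    have hfr := hFrec k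
    have hone : mkQ (fA (k+2)) - PowerSeries.X * (mkQ (fA (k+1)) * mkQ (fA (k+2))) = 1 := by
      linear_combination hfr
    show V (k+2) * mkQ (fA (k+2)) = V (k+1)
    calc V (k+2) * mkQ (fA (k+2)) = (V (k+1) - PowerSeries.X * V k) * mkQ (fA (k+2)) := by
          rw [hVeq]
      _ = (V (k+1) - PowerSeries.X * (V (k+1) * mkQ (fA (k+1)))) * mkQ (fA (k+2)) := by rw [ih]
      _ = V (k+1) * (mkQ (fA (k+2)) - PowerSeries.X * (mkQ (fA (k+1)) * mkQ (fA (k+2)))) := by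
          ring
      _ = V (k+1) * 1 := by rw [hone]
      _ = V (k+1) := by ring

lemma alg_base (S : PowerSeries ℚ)
    (hS : S = PowerSeries.X * ((mkQ (fA 2) - 1) * mkQ (fA 2) + 1 * S)) :
    (1 - PowerSeries.X) * V 2 ^ 2 * S = PowerSeries.X ^ 2 := by
  have hA : mkQ (fA 2) = 1 + PowerSeries.X * mkQ (fA 2) := by
    have h : mkQ (fA 2) = 1 + PowerSeries.X * (mkQ (fA 1) * mkQ (fA 2)) := hFrec 0
    rw [hF1, one_mul] at h
    exact h
  have hB : (1 - PowerSeries.X) * S = PowerSeries.X ^ 2 * (mkQ (fA 2) * mkQ (fA 2)) := by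
    linear_combination hS + (PowerSeries.X * mkQ (fA 2)) * hA
  have hV2 : V 2 * mkQ (fA 2) = 1 := by
    have h : V 2 * mkQ (fA 2) = V 1 := hFV 1
    exact h
  calc (1 - PowerSeries.X) * V 2 ^ 2 * S = V 2 ^ 2 * ((1 - PowerSeries.X) * S) := by ring
    _ = V 2 ^ 2 * (PowerSeries.X ^ 2 * (mkQ (fA 2) * mkQ (fA 2))) := by rw [hB]
    _ = PowerSeries.X ^ 2 * ((V 2 * mkQ (fA 2)) * (V 2 * mkQ (fA 2))) := by ring
    _ = PowerSeries.X ^ 2 := by rw [hV2]; ring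

lemma alg_step (W S : PowerSeries ℚ) (kk : ℕ)
    (hS : S = PowerSeries.X * (W * mkQ (fA (kk+3)) + mkQ (fA (kk+2)) * S))
    (hW : (1 - PowerSeries.X) * V (kk+2) ^ 2 * W = PowerSeries.X ^ (kk+2)) :
    (1 - PowerSeries.X) * V (kk+3) ^ 2 * S = PowerSeries.X ^ (kk+3) := by
  have hfr : mkQ (fA (kk+3)) = 1 + PowerSeries.X * (mkQ (fA (kk+2)) * mkQ (fA (kk+3))) :=
    hFrec (kk+1)
  have hu : mkQ (fA (kk+3)) - PowerSeries.X * (mkQ (fA (kk+2)) * mkQ (fA (kk+3))) = 1 := by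
    linear_combination hfr
  have hr' : S * (1 - PowerSeries.X * mkQ (fA (kk+2))) =
      PowerSeries.X * (W * mkQ (fA (kk+3))) := by
    linear_combination hS
  have h1 : S = PowerSeries.X * (W * (mkQ (fA (kk+3)) * mkQ (fA (kk+3)))) := by
    calc S = S * 1 := by ring
      _ = S * (mkQ (fA (kk+3)) - PowerSeries.X * (mkQ (fA (kk+2)) * mkQ (fA (kk+3)))) := by
          rw [hu]
      _ = (S * (1 - PowerSeries.X * mkQ (fA (kk+2)))) * mkQ (fA (kk+3)) := by ring
      _ = (PowerSeries.X * (W * mkQ (fA (kk+3)))) * mkQ (fA (kk+3)) := by rw [hr']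
      _ = PowerSeries.X * (W * (mkQ (fA (kk+3)) * mkQ (fA (kk+3)))) := by ring
  have hvf : V (kk+3) * mkQ (fA (kk+3)) = V (kk+2) := hFV (kk+2)
  calc (1 - PowerSeries.X) * V (kk+3) ^ 2 * S
      = PowerSeries.X * ((V (kk+3) * mkQ (fA (kk+3))) * (V (kk+3) * mkQ (fA (kk+3))) *
          ((1 - PowerSeries.X) * W)) := by rw [h1]; ring
    _ = PowerSeries.X * (V (kk+2) * V (kk+2) * ((1 - PowerSeries.X) * W)) := by rw [hvf]
    _ = PowerSeries.X * ((1 - PowerSeries.X) * V (kk+2) ^ 2 * W) := by ring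
    _ = PowerSeries.X * PowerSeries.X ^ (kk+2) := by rw [hW]
    _ = PowerSeries.X ^ (kk+3) := by ring

lemma hWV : ∀ kk, (1 - PowerSeries.X) * V (kk+2) ^ 2 * mkQ (fW kk) = PowerSeries.X ^ (kk+2) := by
  intro kk
  induction kk with
  | zero => exact alg_base (mkQ (fW 0)) hW0rec
  | succ kk ih => exact alg_step (mkQ (fW kk)) (mkQ (fW (kk+1))) kk (hWrec kk) ih

end Series


/-- For `k ≥ 2`, `G_{12-3-⋯-k}(x) = 1/((1−x)·U_k(1/(2√x))²)`, equivalently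
`(1−x)·V_k²·G_{12-3-⋯-k} = x^k`. -/
theorem statement11 (k : ℕ) (hk : 2 ≤ k) :
    (1 - PowerSeries.X) * V k ^ 2 * Ggen (⟨1, ({0} : Set ℕ)⟩ : GenPattern k) =
      PowerSeries.X ^ k := by
  obtain ⟨d, rfl⟩ : ∃ d, k = d + 2 := ⟨k - 2, by omega⟩
  have hGgen : Ggen (⟨1, ({0} : Set ℕ)⟩ : GenPattern (d+2)) = mkQ (fG (d+2)) := rfl
  rw [hGgen]
  rcases d with - | dd
  · exact alg_base (mkQ (fG 2)) hG2rec
  · exact alg_step (mkQ (fW dd)) (mkQ (fG (dd+3))) dd (hGrec dd) (hWV dd)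
end

section
/- For every n≥1, the number of permutations of {1,…,n} avoiding the classical pattern 1-3-2 and the generalized pattern 12-3 (indices i with π(i)<π(i+1) and j>i+1 with π(i+1)<π(j) — i.e. an occurrence is positions i,i+1,j with π(i)<π(i+1)<π(j)) equals 2^{n−1}, and the same count holds with 12-3 replaced by 21-3 (positions i,i+1,j with j>i+1 and π(i+1)<π(i)<π(j)). Equivalently F_{12-3}(x) = F_{21-3}(x) = (1−x)/(1−2x). -/
open Finset PowerSeries

/-- The generalized pattern 12-3. -/
def pat12d3 : GenPattern 3 := ⟨1, {0}⟩

/-- The generalized pattern 21-3. -/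
def pat21d3 : GenPattern 3 := ⟨Equiv.swap 0 1, {0}⟩

/-!
Both classes are cut out by conditions that behave well under removing the first entry.
A permutation avoids 1-3-2 and 12-3 iff every entry is exceeded by at most one later entry,
and it avoids 1-3-2 and 21-3 iff every entry exceeded by a later one is immediately followed
by its successor value. Writing a permutation of length `n + 2` as a first value `v` followed by
a permutation `σ` of length `n + 1` in the relative order of the remaining values, either
condition holds iff it holds for `σ` and `v` is one of two admissible values (the two largest
values, resp. the largest value and `σ 0`). So the counts double with each extra entry,
starting from 1 at length 1.
-/

open Equiv (Perm)

variable {n : ℕ}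

theorem exists_adjacent_lt_of_lt {α : Type*} [LinearOrder α] (g : Fin n → α) {i j : Fin n}
    (hij : i < j) (h : g i < g j) :
    ∃ t s : Fin n, (s : ℕ) = t + 1 ∧ i ≤ t ∧ s ≤ j ∧ g t < g s := by
  obtain ⟨d, hd⟩ : ∃ d, (j : ℕ) = i + d + 1 :=
    ⟨j - i - 1, by rw [Fin.lt_def] at hij; omega⟩
  induction d generalizing j with
  | zero => exact ⟨i, j, hd, le_rfl, le_rfl, h⟩
  | succ d ih =>
    let j' : Fin n := ⟨i + d + 1, by omega⟩
    have hj'j : j' < j := Fin.lt_def.2 (by simp only [j']; omega)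
    by_cases h' : g i < g j'
    · obtain ⟨t, s, hs, hit, hsj, hts⟩ := ih (Fin.lt_def.2 (by simp only [j']; omega)) h' rfl
      exact ⟨t, s, hs, hit, hsj.trans hj'j.le, hts⟩
    · exact ⟨j', j, by simp only [j']; omega, Fin.le_def.2 (by simp only [j']; omega), le_rfl,
        (not_lt.1 h').trans_lt h⟩

theorem exists_adjacent_gt_of_gt {α : Type*} [LinearOrder α] (g : Fin n → α) {i j : Fin n}
    (hij : i < j) (h : g j < g i) :
    ∃ t s : Fin n, (s : ℕ) = t + 1 ∧ i ≤ t ∧ s ≤ j ∧ g s < g t :=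
  exists_adjacent_lt_of_lt (α := αᵒᵈ) (OrderDual.toDual ∘ g) hij h

theorem Fin.val_succAbove (p : Fin (n + 1)) (i : Fin n) :
    (p.succAbove i : ℕ) = if (i : ℕ) < p then (i : ℕ) else i + 1 := by
  unfold Fin.succAbove
  split_ifs <;> simp_all [Fin.lt_def]

theorem exists_lt_succAbove_iff (v : Fin (n + 2)) :
    (∃ x : Fin (n + 1), v < v.succAbove x) ↔ v ≠ Fin.last (n + 1) := by
  simp only [Fin.lt_succAbove_iff_le_castSucc, Fin.le_def, Fin.val_castSucc, ne_eq, Fin.ext_iff,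
    Fin.val_last]
  exact ⟨fun ⟨x, hx⟩ => by omega, fun hv => ⟨Fin.last n, by rw [Fin.val_last]; omega⟩⟩

theorem lt_succAbove_subsingleton_iff (v : Fin (n + 2)) :
    {x : Fin (n + 1) | v < v.succAbove x}.Subsingleton ↔
      v = Fin.last (n + 1) ∨ v = (Fin.last n).castSucc := by
  simp only [Set.Subsingleton, Set.mem_ofPred_eq, Fin.lt_succAbove_iff_le_castSucc, Fin.le_def,
    Fin.val_castSucc, Fin.ext_iff, Fin.val_last]
  constructor
  · intro h
    by_contra hv
    have := h (x := Fin.last n) (by simp only [Fin.val_last]; omega) (y := ⟨n - 1, by omega⟩)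
      (by simp only; omega)
    simp only [Fin.val_last] at this
    omega
  · intro hv x hx y hy
    omega

/-- The permutation with first value `v` whose remaining values are in the relative order
of `σ`. -/
def prependPerm (v : Fin (n + 1)) (σ : Perm (Fin n)) : Perm (Fin (n + 1)) :=
  (finSuccEquiv n).trans ((Equiv.optionCongr σ).trans (finSuccEquiv' v).symm)

theorem coe_prependPerm (v : Fin (n + 1)) (σ : Perm (Fin n)) :
    ⇑(prependPerm v σ) = Fin.cons v (v.succAbove ∘ σ) := by
  ext i
  cases i using Fin.cases <;> simp [prependPerm]

theorem prependPerm_inj {v w : Fin (n + 1)} {σ τ : Perm (Fin n)} :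
    prependPerm v σ = prependPerm w τ ↔ v = w ∧ σ = τ := by
  refine ⟨fun h => ?_, by rintro ⟨rfl, rfl⟩; rfl⟩
  have h' := congrArg DFunLike.coe h
  simp only [coe_prependPerm, Fin.cons_inj] at h'
  obtain ⟨rfl, h'⟩ := h'
  exact ⟨rfl, Equiv.ext fun i => Fin.succAbove_right_injective (congrFun h' i)⟩

theorem prependPerm_surjective (π : Perm (Fin (n + 1))) : ∃ v σ, prependPerm v σ = π := by
  have hinj : Function.Injective (Function.uncurry (prependPerm (n := n))) :=
    fun _ _ h => Prod.ext_iff.2 (prependPerm_inj.1 h)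
  obtain ⟨⟨v, σ⟩, h⟩ := ((Fintype.bijective_iff_injective_and_card _).2 ⟨hinj, by
    simp [Fintype.card_perm, Nat.factorial_succ]⟩).2 π
  exact ⟨v, σ, h⟩

theorem card_eq_two_mul_of_prependPerm {P : Perm (Fin (n + 1)) → Prop} {Q : Perm (Fin n) → Prop}
    (a b : Perm (Fin n) → Fin (n + 1)) (hab : ∀ σ, a σ ≠ b σ)
    (h : ∀ v σ, P (prependPerm v σ) ↔ Q σ ∧ (v = a σ ∨ v = b σ)) :
    Nat.card {π // P π} = 2 * Nat.card {σ // Q σ} := by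
  let F : Bool × {σ // Q σ} → {π // P π} := fun ⟨t, σ⟩ =>
    ⟨prependPerm (cond t (a σ) (b σ)) σ, (h _ _).2 ⟨σ.2, by cases t <;> simp⟩⟩
  have hF : Function.Bijective F := by
    refine ⟨?_, fun ⟨π, hπ⟩ => ?_⟩
    · rintro ⟨t, σ, hσ⟩ ⟨t', σ', hσ'⟩ hFF
      obtain ⟨hv, rfl⟩ := prependPerm_inj.1 (Subtype.ext_iff.1 hFF)
      cases t <;> cases t' <;> simp_all [eq_comm]
    · obtain ⟨v, σ, rfl⟩ := prependPerm_surjective π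
      obtain ⟨hσ, hv | hv⟩ := (h v σ).1 hπ
      · exact ⟨(true, ⟨σ, hσ⟩), by simp [F, hv]⟩
      · exact ⟨(false, ⟨σ, hσ⟩), by simp [F, hv]⟩
  rw [← Nat.card_eq_of_bijective F hF, Nat.card_prod, Nat.card_eq_fintype_card (α := Bool)]
  rfl

theorem card_eq_two_pow_of_prependPerm (P : (n : ℕ) → Perm (Fin n) → Prop)
    (hP : ∀ π, P 1 π) (a b : (n : ℕ) → Perm (Fin (n + 1)) → Fin (n + 2))
    (hab : ∀ n σ, a n σ ≠ b n σ)
    (h : ∀ n v σ, P (n + 2) (prependPerm v σ) ↔ P (n + 1) σ ∧ (v = a n σ ∨ v = b n σ))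
    (n : ℕ) :
    Nat.card {π // P (n + 1) π} = 2 ^ n := by
  induction n with
  | zero => simp [hP]
  | succ n ih => rw [card_eq_two_mul_of_prependPerm (a n) (b n) (hab n) (h n), ih, pow_succ']

def ExceededAtMostOnce {ι α : Type*} [Preorder ι] [Preorder α] (f : ι → α) : Prop :=
  ∀ i j k, i < j → i < k → f i < f j → f i < f k → j = k

theorem exceededAtMostOnce_comp_iff {ι α β : Type*} [Preorder ι] [LinearOrder α] [Preorder β]
    {e : α → β} (he : StrictMono e) {f : ι → α} :
    ExceededAtMostOnce (e ∘ f) ↔ ExceededAtMostOnce f := by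
  simp [ExceededAtMostOnce, he.lt_iff_lt]

theorem exceededAtMostOnce_cons_iff {α : Type*} [Preorder α] (x : α) (g : Fin n → α) :
    ExceededAtMostOnce (Fin.cons x g : Fin (n + 1) → α) ↔
      (∀ j k, x < g j → x < g k → j = k) ∧ ExceededAtMostOnce g := by
  simp [ExceededAtMostOnce, Fin.forall_fin_succ, Fin.succ_pos]

theorem exceededAtMostOnce_prependPerm_iff (v : Fin (n + 2)) (σ : Perm (Fin (n + 1))) :
    ExceededAtMostOnce (prependPerm v σ) ↔
      ExceededAtMostOnce σ ∧ (v = Fin.last (n + 1) ∨ v = (Fin.last n).castSucc) := by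
  rw [coe_prependPerm, exceededAtMostOnce_cons_iff,
    exceededAtMostOnce_comp_iff (Fin.strictMono_succAbove v), and_comm,
    ← lt_succAbove_subsingleton_iff]
  refine and_congr_right fun _ =>
    ⟨fun h x hx y hy => ?_, fun h j k hj hk => σ.injective (h hj hk)⟩
  simpa using congrArg σ (h (σ.symm x) (σ.symm y) (by simpa using hx) (by simpa using hy))

/-- On permutations this singles out the reverse layered ones: decreasing sequences of
increasing runs of consecutive values. -/
def SuccFollowsExceeded {m : ℕ} (f : Fin n → Fin m) : Prop :=
  ∀ i s k : Fin n, (s : ℕ) = i + 1 → s ≤ k → f i < f k → (f s : ℕ) = f i + 1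

theorem SuccFollowsExceeded.lt_of_le_of_lt {m : ℕ} {f : Fin n → Fin m}
    (h : SuccFollowsExceeded f) (hf : Function.Injective f) {i j k : Fin n}
    (hij : i ≤ j) (hjk : j < k) (hik : f i < f k) : f j < f k := by
  obtain ⟨d, hd⟩ : ∃ d, (j : ℕ) = i + d := ⟨j - i, by rw [Fin.le_def] at hij; omega⟩
  induction d generalizing j with
  | zero => rwa [Fin.ext (by omega : (j : ℕ) = i)]
  | succ d ih =>
    let t : Fin n := ⟨i + d, by omega⟩
    have htk : f t < f k :=
      ih (Fin.le_def.2 (by simp [t])) (Fin.lt_def.2 (by simp only [t]; omega)) rfl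
    have hj := h t j k (by simp only [t]; omega) hjk.le htk
    exact lt_of_le_of_ne (Fin.le_def.2 (by omega)) (hf.ne hjk.ne)

theorem succFollowsExceeded_cons_iff {m : ℕ} (x : Fin m) (g : Fin (n + 1) → Fin m) :
    SuccFollowsExceeded (Fin.cons x g : Fin (n + 2) → Fin m) ↔
      ((∃ k, x < g k) → (g 0 : ℕ) = x + 1) ∧ SuccFollowsExceeded g := by
  constructor
  · intro h
    refine ⟨fun ⟨k, hk⟩ => ?_, fun i s k hs hsk hik => ?_⟩
    · simpa using h 0 1 k.succ rfl (Fin.succ_pos k) (by simpa using hk)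
    · simpa using
        h i.succ s.succ k.succ (by simpa using hs) (by simpa using hsk) (by simpa using hik)
  · rintro ⟨hhead, htail⟩ i s k hs hsk hik
    obtain ⟨s, rfl⟩ := Fin.exists_succ_eq.2 (show s ≠ 0 by rintro rfl; simp at hs)
    obtain ⟨k, rfl⟩ := Fin.exists_succ_eq.2 (show k ≠ 0 by rintro rfl; simp at hsk)
    cases i using Fin.cases with
    | zero =>
      obtain rfl : s = 0 := Fin.ext (by simpa using hs)
      simpa using hhead ⟨k, by simpa using hik⟩
    | succ i =>
      simpa using htail i s k (by simpa using hs) (by simpa using hsk) (by simpa using hik)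

theorem succFollowsExceeded_succAbove_comp_iff {k : ℕ} {v : Fin (n + 2)}
    {f : Fin k → Fin (n + 1)} (hv : ∀ s : Fin k, (s : ℕ) ≠ 0 → v ≠ (f s).castSucc) :
    SuccFollowsExceeded (v.succAbove ∘ f) ↔ SuccFollowsExceeded f := by
  simp only [SuccFollowsExceeded, Function.comp_apply, Fin.succAbove_lt_succAbove_iff]
  refine forall₃_congr fun i s k => imp_congr_right fun hs => imp_congr_right fun _ =>
    imp_congr_right fun _ => ?_
  have := hv s (by omega)
  rw [Ne, Fin.ext_iff, Fin.val_castSucc] at this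
  rw [Fin.val_succAbove, Fin.val_succAbove]
  split_ifs <;> omega

theorem succFollowsExceeded_prependPerm_iff (v : Fin (n + 2)) (σ : Perm (Fin (n + 1))) :
    SuccFollowsExceeded (prependPerm v σ) ↔
      SuccFollowsExceeded σ ∧ (v = Fin.last (n + 1) ∨ v = (σ 0).castSucc) := by
  have hhead : ((∃ k, v < v.succAbove (σ k)) → (v.succAbove (σ 0) : ℕ) = v + 1) ↔
      v = Fin.last (n + 1) ∨ v = (σ 0).castSucc := by
    have hex : (∃ k, v < v.succAbove (σ k)) ↔ ∃ x, v < v.succAbove x :=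
      ⟨fun ⟨k, hk⟩ => ⟨σ k, hk⟩, fun ⟨x, hx⟩ => ⟨σ.symm x, by simpa using hx⟩⟩
    rw [hex, exists_lt_succAbove_iff, or_iff_not_imp_left, Fin.val_succAbove,
      Fin.ext_iff (b := (σ 0).castSucc), Fin.val_castSucc]
    refine imp_congr_right fun _ => ?_
    split_ifs <;> omega
  rw [coe_prependPerm, succFollowsExceeded_cons_iff]
  simp only [Function.comp_apply]
  rw [hhead, and_comm]
  refine and_congr_left fun hv => succFollowsExceeded_succAbove_comp_iff fun s hs => ?_
  rcases hv with rfl | rfl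
  · exact (Fin.castSucc_lt_last _).ne'
  · exact fun h => hs (by simpa using σ.injective (Fin.castSucc_injective _ h).symm)

theorem exists_occ_132_iff (π : Perm (Fin n)) :
    (∃ f, pat132.Occ π f) ↔ ∃ a b c, a < b ∧ b < c ∧ π a < π c ∧ π c < π b := by
  constructor
  · rintro ⟨f, hf, hord, -⟩
    exact ⟨f 0, f 1, f 2, hf (by decide), hf (by decide), (hord 0 2).2 (by decide),
      (hord 2 1).2 (by decide)⟩
  · rintro ⟨a, b, c, hab, hbc, hac, hcb⟩
    have hπab := hac.trans hcb
    refine ⟨![a, b, c], by simp [hab, hbc], ?_, by simp [pat132]⟩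
    simp [Fin.forall_fin_succ, pat132, Equiv.swap_apply_of_ne_of_ne, hac, hcb, hπab, hcb.not_gt,
      hac.le, hπab.le]

theorem exists_occ_12d3_iff (π : Perm (Fin n)) :
    (∃ f, pat12d3.Occ π f) ↔
      ∃ a b c : Fin n, (b : ℕ) = a + 1 ∧ b < c ∧ π a < π b ∧ π b < π c := by
  constructor
  · rintro ⟨f, hf, hord, hadj⟩
    exact ⟨f 0, f 1, f 2, hadj 0 rfl (by decide), hf (by decide), (hord 0 1).2 (by decide),
      (hord 1 2).2 (by decide)⟩
  · rintro ⟨a, b, c, hab, hbc, h1, h2⟩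
    have h3 := h1.trans h2
    refine ⟨![a, b, c], by simp [Fin.lt_def, hab, hbc], ?_, by simp [pat12d3, hab]⟩
    simp [Fin.forall_fin_succ, pat12d3, h1, h2, h3, h1.le, h2.le, h3.le]

theorem exists_occ_21d3_iff (π : Perm (Fin n)) :
    (∃ f, pat21d3.Occ π f) ↔
      ∃ a b c : Fin n, (b : ℕ) = a + 1 ∧ b < c ∧ π b < π a ∧ π a < π c := by
  constructor
  · rintro ⟨f, hf, hord, hadj⟩
    exact ⟨f 0, f 1, f 2, hadj 0 rfl (by decide), hf (by decide), (hord 1 0).2 (by decide),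
      (hord 0 2).2 (by decide)⟩
  · rintro ⟨a, b, c, hab, hbc, h1, h2⟩
    have h3 := h1.trans h2
    refine ⟨![a, b, c], by simp [Fin.lt_def, hab, hbc], ?_, by simp [pat21d3, hab]⟩
    simp [Fin.forall_fin_succ, pat21d3, Equiv.swap_apply_of_ne_of_ne, h1, h2, h3, h1.le, h2.le,
      h3.le]

theorem avoids_of_isEmpty {k : ℕ} (p : GenPattern (k + 1)) (π : Perm (Fin 0)) : p.Avoids π :=
  fun ⟨f, _⟩ => (f 0).elim0

theorem lt_of_avoids_132 {π : Perm (Fin n)} (h : pat132.Avoids π) {i j k : Fin n}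
    (hij : i ≤ j) (hjk : j < k) (hik : π i < π k) : π j < π k := by
  rcases hij.lt_or_eq with hij | rfl
  · refine lt_of_le_of_ne (not_lt.1 fun hkj => h ?_) (π.injective.ne hjk.ne)
    exact (exists_occ_132_iff π).2 ⟨i, j, k, hij, hjk, hik, hkj⟩
  · exact hik

theorem avoids_132_and_12d3_iff (π : Perm (Fin n)) :
    pat132.Avoids π ∧ pat12d3.Avoids π ↔ ExceededAtMostOnce π := by
  simp only [GenPattern.Avoids, exists_occ_132_iff, exists_occ_12d3_iff, not_exists, not_and]
  constructor
  · rintro ⟨h132, h123⟩ i j k hij hik hj hk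
    wlog hjk : j < k generalizing j k
    · rcases (not_lt.1 hjk).lt_or_eq with hkj | rfl
      · exact (this k j hik hij hk hj hkj).symm
      · rfl
    rcases lt_or_gt_of_ne (π.injective.ne hjk.ne) with hjk' | hkj'
    · obtain ⟨t, s, hs, hit, hsj, hts⟩ := exists_adjacent_lt_of_lt π hij hj
      have hsk := hsj.trans_lt hjk
      rcases lt_or_gt_of_ne (π.injective.ne hsk.ne) with hsk' | hks'
      · exact (h123 t s k hs hsk hts hsk').elim
      · exact (h132 i s k (hit.trans_lt (Fin.lt_def.2 (by omega))) hsk hk hks').elim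
    · exact (h132 i j k hij hjk hk hkj').elim
  · intro h
    refine ⟨fun a b c hab hbc hac hcb => ?_, fun a b c hab hbc h1 h2 => ?_⟩
    · exact hbc.ne (h a b c hab (hab.trans hbc) (hac.trans hcb) hac)
    · have hab' : a < b := Fin.lt_def.2 (by omega)
      exact hbc.ne (h a b c hab' (hab'.trans hbc) h1 (h1.trans h2))

theorem succFollowsExceeded_of_avoids {π : Perm (Fin n)} (h132 : pat132.Avoids π)
    (h213 : pat21d3.Avoids π) : SuccFollowsExceeded π := by
  have occ132 := (exists_occ_132_iff π).not.1 h132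
  have occ213 := (exists_occ_21d3_iff π).not.1 h213
  intro i s k hs hsk hik
  have his : i < s := Fin.lt_def.2 (by omega)
  have hik' : i < k := his.trans_le hsk
  have hs_gt : π i < π s := by
    rcases hsk.lt_or_eq with hsk | rfl
    · refine lt_of_le_of_ne (not_lt.1 fun hsi => occ213 ⟨i, s, k, hs, hsk, hsi, hik⟩) ?_
      exact π.injective.ne his.ne
    · exact hik
  by_contra hne
  have hw : (π i : ℕ) + 1 < n := by have := (π s).isLt; rw [Fin.lt_def] at hs_gt; omega
  -- every position of the value `π i + 1` other than `s` completes a forbidden pattern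
  set m := π.symm ⟨π i + 1, hw⟩
  have hπm : (π m : ℕ) = π i + 1 := by simp [m]
  rcases lt_trichotomy (m : ℕ) i with hmi | hmi | hmi
  · -- between `m` and `i` the values descend somewhere, and that descent starts a 21-3
    have hmk : π m < π k := by
      refine lt_of_le_of_ne (Fin.le_def.2 ?_) (π.injective.ne ((Fin.lt_def.2 hmi).trans hik').ne)
      rw [Fin.lt_def] at hik; omega
    obtain ⟨t, t', ht', hmt, ht'i, hdesc⟩ :=
      exists_adjacent_gt_of_gt π (Fin.lt_def.2 hmi) (Fin.lt_def.2 (by omega))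
    have ht'k : t' < k := ht'i.trans_lt hik'
    have htk : π t < π k := lt_of_avoids_132 h132 hmt (Fin.lt_def.2 (by omega) |>.trans ht'k) hmk
    exact occ213 ⟨t, t', k, ht', ht'k, hdesc, htk⟩
  · rw [Fin.ext hmi] at hπm
    omega
  · rcases Nat.lt_or_eq_of_le (show (s : ℕ) ≤ m by omega) with hsm | hsm
    · refine occ132 ⟨i, s, m, his, Fin.lt_def.2 hsm, Fin.lt_def.2 (by omega), Fin.lt_def.2 ?_⟩
      rw [Fin.lt_def] at hs_gt; omega
    · exact hne (by rw [Fin.ext hsm]; exact hπm)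

theorem avoids_132_and_21d3_iff (π : Perm (Fin n)) :
    pat132.Avoids π ∧ pat21d3.Avoids π ↔ SuccFollowsExceeded π := by
  refine ⟨fun h => succFollowsExceeded_of_avoids h.1 h.2, fun h => ?_⟩
  simp only [GenPattern.Avoids, exists_occ_132_iff, exists_occ_21d3_iff, not_exists, not_and]
  refine ⟨fun a b c hab hbc hac hcb => ?_, fun a b c hab hbc h1 h2 => ?_⟩
  · exact (h.lt_of_le_of_lt π.injective hab.le hbc hac).asymm hcb
  · have := h a b c hab hbc.le h2
    rw [Fin.lt_def] at h1
    omega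

theorem card_avoids_132_and_12d3 (n : ℕ) :
    Nat.card {π : Perm (Fin (n + 1)) // pat132.Avoids π ∧ pat12d3.Avoids π} = 2 ^ n := by
  simp_rw [avoids_132_and_12d3_iff]
  exact card_eq_two_pow_of_prependPerm (fun _ π => ExceededAtMostOnce π)
    (fun _ i j _ hij => (hij.ne (Subsingleton.elim i j)).elim)
    (fun n _ => Fin.last (n + 1)) (fun n _ => (Fin.last n).castSucc)
    (fun _ _ => (Fin.castSucc_lt_last _).ne') (fun _ => exceededAtMostOnce_prependPerm_iff) n

theorem card_avoids_132_and_21d3 (n : ℕ) :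
    Nat.card {π : Perm (Fin (n + 1)) // pat132.Avoids π ∧ pat21d3.Avoids π} = 2 ^ n := by
  simp_rw [avoids_132_and_21d3_iff]
  exact card_eq_two_pow_of_prependPerm (fun _ π => SuccFollowsExceeded π)
    (fun _ i s _ hs => absurd hs (by omega))
    (fun n _ => Fin.last (n + 1)) (fun _ σ => (σ 0).castSucc)
    (fun _ _ => (Fin.castSucc_lt_last _).ne') (fun _ => succFollowsExceeded_prependPerm_iff) n

theorem card_avoids_fin_zero {k l : ℕ} (p : GenPattern (k + 1)) (q : GenPattern (l + 1)) :
    Nat.card {π : Perm (Fin 0) // p.Avoids π ∧ q.Avoids π} = 1 := by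
  simp [avoids_of_isEmpty]

theorem one_sub_two_X_mul_mk {R : Type*} [CommRing R] {f : ℕ → R} (h0 : f 0 = 1)
    (hs : ∀ n, f (n + 1) = 2 ^ n) : (1 - 2 * X) * PowerSeries.mk f = 1 - X := by
  ext (_ | _ | n) <;>
    simp [sub_mul, two_mul, add_mul, coeff_one, coeff_X, h0, hs, pow_succ, mul_two]

/-- For `n ≥ 1` the number of permutations of `{1,…,n}` avoiding 1-3-2 and 12-3
equals `2^{n−1}`, and likewise for 21-3; equivalently
`F_{12-3} = F_{21-3} = (1−x)/(1−2x)`. -/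
theorem statement19 :
    (∀ n : ℕ, 1 ≤ n → Nat.card {π : Equiv.Perm (Fin n) //
        pat132.Avoids π ∧ pat12d3.Avoids π} = 2 ^ (n - 1)) ∧
    (∀ n : ℕ, 1 ≤ n → Nat.card {π : Equiv.Perm (Fin n) //
        pat132.Avoids π ∧ pat21d3.Avoids π} = 2 ^ (n - 1)) ∧
    (1 - 2 * PowerSeries.X) * Fgen pat12d3 = 1 - PowerSeries.X ∧
    (1 - 2 * PowerSeries.X) * Fgen pat21d3 = 1 - PowerSeries.X := by
  refine ⟨fun n hn => ?_, fun n hn => ?_, ?_, ?_⟩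
  · obtain ⟨n, rfl⟩ := Nat.exists_eq_add_of_le' hn
    exact card_avoids_132_and_12d3 n
  · obtain ⟨n, rfl⟩ := Nat.exists_eq_add_of_le' hn
    exact card_avoids_132_and_21d3 n
  · exact one_sub_two_X_mul_mk (by simp [card_avoids_fin_zero])
      (by simp [card_avoids_132_and_12d3])
  · exact one_sub_two_X_mul_mk (by simp [card_avoids_fin_zero])
      (by simp [card_avoids_132_and_21d3])
end
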